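/- arXiv:2308.08093 — 6 statements merged into one kernel-verified Lean document; each statement's English description precedes it below -/
import Mathlib

section
/- Let S be a closed subset of a Hilbert space H, x ∈ H, ε > 0, and z ∈ proj_S^ε(x). Then there exists v ∈ proj_S^ε(x) with ‖z - v‖ < 2√ε such that x - z ∈ (4√ε + d_S(x)) ∂_P d_S(v) + 3√ε B, where B is the closed unit ball. -/
open Metric Finset Filter Topology
open scoped InnerProductSpace

/-- The proximal subdifferential of `f` at `x`. -/
def proxSubdiff {H : Type*} [NormedAddCommGroup H] [InnerProductSpace ℝ H]
    (f : H → ℝ) (x : H) : Set H :=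
  {ζ | ∃ σ ≥ (0:ℝ), ∃ η > (0:ℝ), ∀ y, ‖y - x‖ < η →
    f x + ⟪ζ, y - x⟫_ℝ - σ * ‖y - x‖ ^ 2 ≤ f y}

lemma geom_partial_le {r : ℝ} (h0 : 0 ≤ r) (h1 : r < 1) (n : ℕ) :
    ∑ i ∈ range n, r ^ i ≤ (1 - r)⁻¹ := by
  induction n with
  | zero =>
      simp only [range_zero, Finset.sum_empty]
      have : 0 < 1 - r := by linarith
      positivity
  | succ n ih =>
      rw [Finset.sum_range_succ']
      have e1 : ∑ i ∈ range n, r ^ (i + 1) = r * ∑ i ∈ range n, r ^ i := by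
        rw [Finset.mul_sum]
        exact Finset.sum_congr rfl fun i _ => by rw [pow_succ]; ring
      have e2 : r * (1 - r)⁻¹ + 1 = (1 - r)⁻¹ := by
        have hne : (1:ℝ) - r ≠ 0 := by linarith
        field_simp
        ring
      have h3 : r * ∑ i ∈ range n, r ^ i ≤ r * (1 - r)⁻¹ :=
        mul_le_mul_of_nonneg_left ih h0
      simp only [e1, pow_zero]
      linarith

lemma sq_le_imp {A B : ℝ} (hA : 0 ≤ A) (hB : 0 ≤ B) (h : A ^ 2 ≤ B ^ 2) : A ≤ B :=
  (pow_le_pow_iff_left₀ hA hB (by norm_num)).1 h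

open scoped Classical in
noncomputable def bpSeq {H : Type*} [NormedAddCommGroup H] [InnerProductSpace ℝ H]
    (S : Set H) (x : H) (μ δ : ℕ → ℝ) (z : H) : ℕ → H × (H → ℝ)
  | 0 => (z, fun u => ‖x - u‖ ^ 2 + μ 0 * ‖u - z‖ ^ 2)
  | (n + 1) =>
      let p := bpSeq S x μ δ z n
      let w := if h : ∃ s ∈ S, p.2 s < sInf (p.2 '' S) + δ (n + 1) then h.choose else z
      (w, fun u => p.2 u + μ (n + 1) * ‖u - w‖ ^ 2)

section bp
variable {H : Type*} [NormedAddCommGroup H] [InnerProductSpace ℝ H]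
  {S : Set H} {x z : H} {μ δ : ℕ → ℝ}

lemma bpSeq_succ_snd (n : ℕ) (u : H) :
    (bpSeq S x μ δ z (n + 1)).2 u
      = (bpSeq S x μ δ z n).2 u + μ (n + 1) * ‖u - (bpSeq S x μ δ z (n + 1)).1‖ ^ 2 := by
  simp [bpSeq]

lemma bpSeq_succ_spec (hS : S.Nonempty) (n : ℕ) (hδ : 0 < δ (n + 1)) :
    (bpSeq S x μ δ z (n + 1)).1 ∈ S ∧
      (bpSeq S x μ δ z n).2 ((bpSeq S x μ δ z (n + 1)).1)
        < sInf ((bpSeq S x μ δ z n).2 '' S) + δ (n + 1) := by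
  have hex : ∃ s ∈ S, (bpSeq S x μ δ z n).2 s
      < sInf ((bpSeq S x μ δ z n).2 '' S) + δ (n + 1) := by
    obtain ⟨a, ha, hlt⟩ := Real.lt_sInf_add_pos (hS.image (bpSeq S x μ δ z n).2) hδ
    obtain ⟨s, hs, rfl⟩ := ha
    exact ⟨s, hs, hlt⟩
  have : (bpSeq S x μ δ z (n + 1)).1 = hex.choose := by
    simp only [bpSeq, dif_pos hex]
  rw [this]
  exact hex.choose_spec

lemma bpSeq_snd_eq (n : ℕ) (u : H) :
    (bpSeq S x μ δ z n).2 u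
      = ‖x - u‖ ^ 2 + ∑ i ∈ range (n + 1), μ i * ‖u - (bpSeq S x μ δ z i).1‖ ^ 2 := by
  induction n with
  | zero => simp [bpSeq]
  | succ n ih =>
      rw [bpSeq_succ_snd, ih, sum_range_succ _ (n+1)]
      ring

end bp

set_option maxHeartbeats 4000000 in
theorem stmt1 {H : Type*} [NormedAddCommGroup H] [InnerProductSpace ℝ H] [CompleteSpace H]
    (S : Set H) (hS : S.Nonempty) (hSc : IsClosed S) (x : H) (ε : ℝ) (hε : 0 < ε)
    (z : H) (hz : z ∈ S ∧ ‖x - z‖ ^ 2 < (infDist x S) ^ 2 + ε) :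
    ∃ v, (v ∈ S ∧ ‖x - v‖ ^ 2 < (infDist x S) ^ 2 + ε) ∧ ‖z - v‖ < 2 * Real.sqrt ε ∧
      ∃ w ∈ proxSubdiff (fun y => infDist y S) v, ∃ b : H, ‖b‖ ≤ 1 ∧
        x - z = (4 * Real.sqrt ε + infDist x S) • w + (3 * Real.sqrt ε) • b := by
  obtain ⟨hzS, hz2⟩ := hz
  set d := infDist x S with hd_def
  have hd0 : 0 ≤ d := infDist_nonneg
  have hdz : d ≤ ‖x - z‖ := by rw [← dist_eq_norm]; exact infDist_le_dist_of_mem hzS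
  set a := Real.sqrt ε with ha_def
  have ha2 : a ^ 2 = ε := Real.sq_sqrt hε.le
  have ha0 : 0 < a := Real.sqrt_pos.2 hε
  set ε' := ‖x - z‖ ^ 2 - d ^ 2 with hε'def
  have hε'0 : 0 ≤ ε' := by nlinarith
  have hε'ε : ε' < ε := by simp only [hε'def]; nlinarith
  set κ := min (ε / 961) (ε - ε') with hκdef
  have hκ0 : 0 < κ := lt_min (by positivity) (by linarith)
  have hκ1 : κ ≤ ε / 961 := min_le_left _ _
  have hκ2 : κ ≤ ε - ε' := min_le_right _ _
  set k := Real.sqrt κ with hkdef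
  have hk2 : k ^ 2 = κ := Real.sq_sqrt hκ0.le
  have hk0 : 0 ≤ k := Real.sqrt_nonneg _
  have hka : 31 * k ≤ a := by
    have h1 : (31 * k) ^ 2 ≤ a ^ 2 := by rw [mul_pow, hk2, ha2]; nlinarith
    exact sq_le_imp (by positivity) ha0.le h1
  have hk_le_a : k ≤ a := by linarith
  set μ : ℕ → ℝ := fun n => (1/2 : ℝ) ^ (n + 1) with hμdef
  set δ : ℕ → ℝ := fun n => κ * (1/16 : ℝ) ^ n with hδdef
  have hμpos : ∀ n, 0 < μ n := fun n => by positivity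
  have hδpos : ∀ n, 0 < δ n := fun n => by simp only [hδdef]; positivity
  set Z : ℕ → H := fun n => (bpSeq S x μ δ z n).1 with hZdef
  set ψ : ℕ → H → ℝ := fun n => (bpSeq S x μ δ z n).2 with hψdef
  have hZ0 : Z 0 = z := rfl
  have hspec : ∀ n, Z (n+1) ∈ S ∧ ψ n (Z (n+1)) < sInf (ψ n '' S) + δ (n+1) :=
    fun n => bpSeq_succ_spec hS n (hδpos _)
  have hmem : ∀ n, Z n ∈ S := by
    intro n
    cases n with
    | zero => exact hzS
    | succ n => exact (hspec n).1
  have hψeq : ∀ n u, ψ n u = ‖x - u‖ ^ 2 + ∑ i ∈ range (n+1), μ i * ‖u - Z i‖ ^ 2 :=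
    fun n u => bpSeq_snd_eq n u
  have hψsucc : ∀ n u, ψ (n+1) u = ψ n u + μ (n+1) * ‖u - Z (n+1)‖ ^ 2 :=
    fun n u => bpSeq_succ_snd n u
  have hψ_ge : ∀ n u, ‖x - u‖ ^ 2 ≤ ψ n u := by
    intro n u
    rw [hψeq]
    have : (0:ℝ) ≤ ∑ i ∈ range (n+1), μ i * ‖u - Z i‖ ^ 2 :=
      Finset.sum_nonneg fun i _ => by positivity
    linarith
  have hψ0 : ∀ n u, 0 ≤ ψ n u := fun n u => le_trans (by positivity) (hψ_ge n u)
  have hInfLe : ∀ n, ∀ s ∈ S, sInf (ψ n '' S) ≤ ψ n s := by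
    intro n s hs
    exact csInf_le ⟨0, fun y hy => by obtain ⟨u, _, rfl⟩ := hy; exact hψ0 n u⟩
      (Set.mem_image_of_mem _ hs)
  set aN : ℕ → ℝ := fun n => ψ n (Z n) with haNdef
  have haA : ∀ n, ψ n (Z (n+1)) = aN (n+1) := by
    intro n
    have := hψsucc n (Z (n+1))
    simp only [sub_self, norm_zero] at this
    simp only [haNdef, this]
    ring
  have haN0 : aN 0 = ‖x - z‖ ^ 2 := by
    have h1 := hψeq 0 (Z 0)
    rw [Finset.sum_range_one, hZ0, sub_self, norm_zero] at h1
    simp only [haNdef]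
    rw [hZ0, h1]
    ring
  have hstep : ∀ n, aN (n+1) < aN n + δ (n+1) := by
    intro n
    have h1 := (hspec n).2
    rw [haA n] at h1
    exact lt_of_lt_of_le h1 (by linarith [hInfLe n (Z n) (hmem n)])
  have hInfGt : ∀ n, aN (n+1) - δ (n+1) < sInf (ψ n '' S) := by
    intro n
    have h1 := (hspec n).2
    rw [haA n] at h1
    linarith
  have hApart : ∀ n, aN n ≤ ‖x - z‖ ^ 2 + (κ/15) * (1 - (1/16:ℝ)^n) := by
    intro n
    induction n with
    | zero => simp [haN0]
    | succ n ih =>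
        have h1 := hstep n
        have h2 : δ (n+1) = κ * ((1/16:ℝ)^n * (1/16)) := by
          simp only [hδdef]; rw [pow_succ]
        have h3 : (1/16:ℝ)^(n+1) = (1/16:ℝ)^n * (1/16) := pow_succ _ _
        have h4 : (0:ℝ) ≤ (1/16:ℝ)^n := by positivity
        rw [h3]
        nlinarith
  have hA : ∀ n, aN n ≤ ‖x - z‖ ^ 2 + κ/15 := by
    intro n
    have h1 := hApart n
    have h4 : (0:ℝ) ≤ (1/16:ℝ)^n := by positivity
    nlinarith
  have hxZ2 : ∀ n, ‖x - Z n‖ ^ 2 ≤ ‖x - z‖ ^ 2 + κ/15 :=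
    fun n => le_trans (hψ_ge n (Z n)) (hA n)
  -- step bounds
  have hst0 : ‖Z 1 - Z 0‖ ≤ (44/31) * a := by
    have hμ0 : μ 0 = 1/2 := by simp [hμdef]
    have e1 : ψ 0 (Z 1) = ‖x - Z 1‖ ^ 2 + μ 0 * ‖Z 1 - z‖ ^ 2 := by
      rw [hψeq 0 (Z 1)]; simp [hZ0]
    have e2 : ψ 0 (Z 1) = aN 1 := haA 0
    have e3 : aN 1 < aN 0 + δ 1 := hstep 0
    have e4 : d ^ 2 ≤ ‖x - Z 1‖ ^ 2 := by
      have h' : d ≤ ‖x - Z 1‖ := by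
        rw [← dist_eq_norm]; exact infDist_le_dist_of_mem (hmem 1)
      exact pow_le_pow_left₀ hd0 h' 2
    have e5 : μ 0 * ‖Z 1 - z‖ ^ 2 ≤ ε' + δ 1 := by
      rw [haN0] at e3
      simp only [hε'def]
      linarith only [e1, e2, e3, e4]
    have e6 : δ 1 = κ / 16 := by
      show κ * (1/16:ℝ)^1 = κ / 16
      ring
    have e7 : ‖Z 1 - z‖ ^ 2 ≤ ((44/31) * a) ^ 2 := by
      rw [hμ0] at e5
      rw [e6] at e5
      rw [mul_pow, ha2]
      rw [hε'def] at hε'ε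
      linarith only [e5, hε'ε, hκ1, hε]
    rw [hZ0]
    exact sq_le_imp (norm_nonneg _) (by positivity) e7
  have hstn : ∀ m, ‖Z (m+2) - Z (m+1)‖ ≤ 2 * k * (1/2:ℝ)^(m+1) := by
    intro m
    have e1 : ψ (m+1) (Z (m+2)) = ψ m (Z (m+2)) + μ (m+1) * ‖Z (m+2) - Z (m+1)‖ ^ 2 :=
      hψsucc m (Z (m+2))
    have e2 : ψ (m+1) (Z (m+2)) = aN (m+2) := haA (m+1)
    have e3 : aN (m+2) < aN (m+1) + δ (m+2) := hstep (m+1)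
    have e4 : aN (m+1) - δ (m+1) < ψ m (Z (m+2)) :=
      lt_of_lt_of_le (hInfGt m) (hInfLe m (Z (m+2)) (hmem (m+2)))
    have e5 : μ (m+1) * ‖Z (m+2) - Z (m+1)‖ ^ 2 ≤ δ (m+1) + δ (m+2) := by linarith
    set C := (1/2:ℝ)^(m+1) with hCdef
    have hC0 : (0:ℝ) < C := by positivity
    have hC1 : C ≤ 1 := by
      simp only [hCdef]
      exact pow_le_one₀ (by norm_num) (by norm_num)
    have key : ‖Z (m+2) - Z (m+1)‖ ^ 2 ≤ (2 * k * C) ^ 2 := by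
      have hμv : μ (m+1) = C * (1/2) := by
        simp only [hμdef, hCdef]; rw [pow_succ]
      have hδ1 : δ (m+1) = κ * (1/16:ℝ)^(m+1) := rfl
      have hδ2 : δ (m+2) = κ * ((1/16:ℝ)^(m+1) * (1/16)) := by
        simp only [hδdef]; rw [pow_succ]
      have e16 : (1/16:ℝ)^(m+1) = C^4 := by
        simp only [hCdef]
        rw [show (1/16:ℝ) = (1/2)^4 by norm_num, ← pow_mul, mul_comm, pow_mul]
      have h43 : C^4 ≤ C^3 := by
        calc C^4 = C^3 * C := by ring
        _ ≤ C^3 * 1 := mul_le_mul_of_nonneg_left hC1 (by positivity)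
        _ = C^3 := mul_one _
      have hR : μ (m+1) * (2 * k * C) ^ 2 = 2 * κ * C^3 := by
        rw [hμv, show (2*k*C)^2 = 4*(k^2)*C^2 from by ring, hk2]
        ring
      have hgoal : δ (m+1) + δ (m+2) ≤ μ (m+1) * (2 * k * C) ^ 2 := by
        rw [hδ1, hδ2, e16, hR]
        nlinarith [mul_le_mul_of_nonneg_left h43 hκ0.le]
      exact le_of_mul_le_mul_left (by linarith) (hμpos (m+1))
    exact sq_le_imp (norm_nonneg _) (by positivity) key
  -- stage 2
  have hgeo : ∀ n, dist (Z n) (Z (n+1)) ≤ (2*a) * (1/2:ℝ)^n := by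
    intro n
    cases n with
    | zero =>
        rw [dist_eq_norm, norm_sub_rev]
        refine le_trans hst0 ?_
        rw [pow_zero, mul_one]
        linarith
    | succ m =>
        rw [dist_eq_norm, norm_sub_rev]
        refine le_trans (hstn m) ?_
        have h2 : (0:ℝ) ≤ (1/2:ℝ)^(m+1) := by positivity
        nlinarith [hk_le_a]
  have hcauchy : CauchySeq Z := cauchySeq_of_le_geometric (1/2) (2*a) (by norm_num) hgeo
  obtain ⟨v, hv⟩ := cauchySeq_tendsto_of_complete hcauchy
  have hvS : v ∈ S := hSc.mem_of_tendsto hv (Filter.Eventually.of_forall hmem)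
  have hv1 : Tendsto (fun n => Z (n+1)) atTop (𝓝 v) := hv.comp (tendsto_add_atTop_nat 1)
  have hZz1 : ∀ m, ‖Z (m+1) - z‖ ≤ (44/31)*a + 4*k*(1/2 - (1/2:ℝ)^(m+1)) := by
    intro m
    induction m with
    | zero =>
        have h1 : ‖Z 1 - z‖ ≤ (44/31)*a := by
          have := hst0; rw [hZ0] at this; exact this
        have h2 : ((1:ℝ)/2)^1 = 1/2 := by norm_num
        rw [h2]
        linarith
    | succ m ih =>
        have tri : ‖Z (m+1+1) - z‖ ≤ ‖Z (m+1+1) - Z (m+1)‖ + ‖Z (m+1) - z‖ :=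
          norm_sub_le_norm_sub_add_norm_sub _ _ _
        have hs : ‖Z (m+1+1) - Z (m+1)‖ ≤ 2*k*(1/2:ℝ)^(m+1) := hstn m
        have h2 : (1/2:ℝ)^(m+1+1) = (1/2)^(m+1) * (1/2) := pow_succ _ _
        have h3 : k * (1/2:ℝ)^(m+1+1) = k * (1/2:ℝ)^(m+1) * (1/2) := by rw [h2]; ring
        linarith
  have hZz : ∀ n, ‖Z n - z‖ ≤ (46/31)*a := by
    intro n
    cases n with
    | zero =>
        rw [hZ0, sub_self, norm_zero]
        positivity
    | succ m =>
        have h1 := hZz1 m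
        have h2 : (0:ℝ) ≤ (1/2:ℝ)^(m+1) := by positivity
        have h3 : (0:ℝ) ≤ k * (1/2:ℝ)^(m+1) := mul_nonneg hk0 h2
        linarith only [h1, hka, hk0, h3, ha0]
  have hvz : ‖v - z‖ ≤ (46/31)*a := by
    have hl : Tendsto (fun n => ‖Z n - z‖) atTop (𝓝 ‖v - z‖) :=
      (hv.sub tendsto_const_nhds).norm
    exact le_of_tendsto hl (Filter.Eventually.of_forall hZz)
  have htail : ∀ m, ∀ i ≤ m, ‖Z (m+1) - Z (i+1)‖ ≤ 4*k*((1/2:ℝ)^(i+1) - (1/2:ℝ)^(m+1)) := by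
    intro m
    induction m with
    | zero =>
        intro i hi
        have : i = 0 := Nat.le_zero.1 hi
        subst this
        simp
    | succ m ih =>
        intro i hi
        rcases Nat.lt_or_ge i (m+1) with hlt|hge
        · have hi' : i ≤ m := by omega
          have tri : ‖Z (m+1+1) - Z (i+1)‖ ≤ ‖Z (m+1+1) - Z (m+1)‖ + ‖Z (m+1) - Z (i+1)‖ :=
            norm_sub_le_norm_sub_add_norm_sub _ _ _
          have hs : ‖Z (m+1+1) - Z (m+1)‖ ≤ 2*k*(1/2:ℝ)^(m+1) := hstn m
          have hh := ih i hi'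
          have h2 : (1/2:ℝ)^(m+1+1) = (1/2)^(m+1) * (1/2) := pow_succ _ _
          have h3 : k * (1/2:ℝ)^(m+1+1) = k * (1/2:ℝ)^(m+1) * (1/2) := by rw [h2]; ring
          linarith
        · have : i = m + 1 := by omega
          subst this
          simp
  have htail' : ∀ n j, 1 ≤ j → j ≤ n + 1 → ‖Z (n+1) - Z j‖ ≤ 4*k*(1/2:ℝ)^j := by
    intro n j h1 h2
    obtain ⟨i, rfl⟩ : ∃ i, j = i + 1 := ⟨j - 1, by omega⟩
    refine le_trans (htail n i (by omega)) ?_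
    have h3 : (0:ℝ) ≤ (1/2:ℝ)^(n+1) := by positivity
    have h4 : (0:ℝ) ≤ k * (1/2:ℝ)^(n+1) := mul_nonneg hk0 h3
    linarith
  -- stage 3
  set f : ℕ → H := fun i => μ i • (Z i - z) with hfdef
  have hfb : ∀ i, ‖f i‖ ≤ ((23/31)*a) * (1/2:ℝ)^i := by
    intro i
    have h1 : ‖f i‖ = μ i * ‖Z i - z‖ := by
      simp only [hfdef, norm_smul, Real.norm_eq_abs, abs_of_pos (hμpos i)]
    rw [h1]
    have h2 : μ i = (1/2:ℝ)^(i+1) := rfl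
    have h3 := hZz i
    calc μ i * ‖Z i - z‖ ≤ μ i * ((46/31)*a) :=
          mul_le_mul_of_nonneg_left h3 (hμpos i).le
    _ = ((23/31)*a) * (1/2:ℝ)^i := by rw [h2, pow_succ]; ring
  have hsummable : Summable f :=
    Summable.of_norm_bounded
      (Summable.mul_left _ (summable_geometric_of_lt_one (by norm_num) (by norm_num))) hfb
  set W := ∑' i, f i with hWdef
  have hW : Tendsto (fun n => ∑ i ∈ range n, f i) atTop (𝓝 W) :=
    hsummable.hasSum.tendsto_sum_nat
  have hW1 : Tendsto (fun n => ∑ i ∈ range (n+1), f i) atTop (𝓝 W) :=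
    hW.comp (tendsto_add_atTop_nat 1)
  have hMsum : HasSum μ 1 := by
    have h4 := (hasSum_geometric_of_lt_one (by norm_num : (0:ℝ) ≤ 1/2)
      (by norm_num : (1:ℝ)/2 < 1)).mul_left (1/2)
    have h5 : (1/2:ℝ) * (1 - 1/2)⁻¹ = 1 := by norm_num
    rw [h5] at h4
    have h6 : μ = fun i => (1/2:ℝ) * (1/2)^i := by
      funext i
      show (1/2:ℝ)^(i+1) = _
      rw [pow_succ]; ring
    rw [h6]
    exact h4
  have hM1 : Tendsto (fun n => ∑ i ∈ range (n+1), μ i) atTop (𝓝 1) :=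
    hMsum.tendsto_sum_nat.comp (tendsto_add_atTop_nat 1)
  set qn : ℕ → H := fun n => ∑ i ∈ range (n+1), μ i • (Z i - Z (n+1)) with hqndef
  have hqneq : ∀ n, qn n = (∑ i ∈ range (n+1), f i) + (∑ i ∈ range (n+1), μ i) • (z - Z (n+1)) := by
    intro n
    simp only [hqndef, hfdef]
    rw [Finset.sum_smul, ← Finset.sum_add_distrib]
    refine Finset.sum_congr rfl fun i _ => ?_
    rw [← smul_add]
    congr 1
    abel
  have hq : Tendsto qn atTop (𝓝 (W + (z - v))) := by
    have h1 : Tendsto (fun n => (∑ i ∈ range (n+1), μ i) • (z - Z (n+1))) atTop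
        (𝓝 ((1:ℝ) • (z - v))) := hM1.smul (tendsto_const_nhds.sub hv1)
    have h2 := hW1.add h1
    rw [one_smul] at h2
    have h3 : (fun n => (∑ i ∈ range (n+1), f i) + (∑ i ∈ range (n+1), μ i) • (z - Z (n+1))) = qn := by
      funext n
      rw [hqneq n]
    rw [h3] at h2
    exact h2
  have hqn_norm : ∀ n, ‖qn n‖ ≤ (23/31)*a + k := by
    intro n
    have h1 : ‖qn n‖ ≤ ∑ i ∈ range (n+1), μ i * ‖Z i - Z (n+1)‖ := by
      refine le_trans (norm_sum_le _ _) ?_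
      refine Finset.sum_le_sum fun i _ => ?_
      rw [norm_smul, Real.norm_eq_abs, abs_of_pos (hμpos i)]
    have h2 : ∑ i ∈ range (n+1), μ i * ‖Z i - Z (n+1)‖
        = (∑ i ∈ range n, μ (i+1) * ‖Z (i+1) - Z (n+1)‖) + μ 0 * ‖Z 0 - Z (n+1)‖ :=
      Finset.sum_range_succ' _ n
    have h3 : μ 0 * ‖Z 0 - Z (n+1)‖ ≤ (23/31)*a := by
      have h3a := hZz (n+1)
      have h4 : ‖Z 0 - Z (n+1)‖ = ‖Z (n+1) - z‖ := by rw [hZ0, norm_sub_rev]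
      have hμ0 : μ 0 = 1/2 := by norm_num [hμdef]
      rw [h4, hμ0]
      linarith
    have h5 : ∀ i ∈ range n, μ (i+1) * ‖Z (i+1) - Z (n+1)‖ ≤ 2*k*(1/4:ℝ)^(i+1) := by
      intro i hi
      have hin : i < n := Finset.mem_range.1 hi
      have h6 : ‖Z (n+1) - Z (i+1)‖ ≤ 4*k*(1/2:ℝ)^(i+1) :=
        htail' n (i+1) (by omega) (by omega)
      rw [norm_sub_rev] at h6
      have hμi : μ (i+1) = (1/2:ℝ)^(i+1+1) := rfl
      calc μ (i+1) * ‖Z (i+1) - Z (n+1)‖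
          ≤ (1/2:ℝ)^(i+1+1) * (4*k*(1/2:ℝ)^(i+1)) := by
            rw [hμi]
            exact mul_le_mul_of_nonneg_left h6 (by positivity)
      _ = 2*k*(1/4:ℝ)^(i+1) := by
            have h7 : (1/4:ℝ)^(i+1) = (1/2:ℝ)^(i+1) * (1/2:ℝ)^(i+1) := by
              rw [← mul_pow]; norm_num
            rw [h7, pow_succ]
            ring
    have h7 : ∑ i ∈ range n, μ (i+1) * ‖Z (i+1) - Z (n+1)‖
        ≤ ∑ i ∈ range n, 2*k*(1/4:ℝ)^(i+1) := Finset.sum_le_sum h5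
    have h8 : ∑ i ∈ range n, 2*k*(1/4:ℝ)^(i+1) ≤ k := by
      have h9 : ∑ i ∈ range n, 2*k*(1/4:ℝ)^(i+1) = (k/2) * ∑ i ∈ range n, (1/4:ℝ)^i := by
        rw [Finset.mul_sum]
        refine Finset.sum_congr rfl fun i _ => ?_
        rw [pow_succ]
        ring
      rw [h9]
      have h10 := geom_partial_le (by norm_num : (0:ℝ) ≤ 1/4) (by norm_num) n
      have h11 : ((1:ℝ) - 1/4)⁻¹ = 4/3 := by norm_num
      rw [h11] at h10
      have h12 : (k/2) * (∑ i ∈ range n, (1/4:ℝ)^i) ≤ (k/2) * (4/3) :=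
        mul_le_mul_of_nonneg_left h10 (by positivity)
      linarith
    calc ‖qn n‖ ≤ ∑ i ∈ range (n+1), μ i * ‖Z i - Z (n+1)‖ := h1
    _ = (∑ i ∈ range n, μ (i+1) * ‖Z (i+1) - Z (n+1)‖) + μ 0 * ‖Z 0 - Z (n+1)‖ := h2
    _ ≤ k + (23/31)*a := add_le_add (h7.trans h8) h3
    _ = (23/31)*a + k := by ring
  set p := (x - v) + (W + (z - v)) with hpdef
  have hp : Tendsto (fun n => (x - Z (n+1)) + qn n) atTop (𝓝 p) :=
    (tendsto_const_nhds.sub hv1).add hq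
  have hqnorm : ‖W + (z - v)‖ ≤ (23/31)*a + k :=
    le_of_tendsto hq.norm (Filter.Eventually.of_forall hqn_norm)
  have hMle : ∀ n, ∑ i ∈ range (n+1), μ i ≤ 1 := by
    intro n
    have h9 : ∑ i ∈ range (n+1), μ i = (1/2) * ∑ i ∈ range (n+1), (1/2:ℝ)^i := by
      rw [Finset.mul_sum]
      refine Finset.sum_congr rfl fun i _ => ?_
      show (1/2:ℝ)^(i+1) = _
      rw [pow_succ]; ring
    rw [h9]
    have h10 := geom_partial_le (by norm_num : (0:ℝ) ≤ 1/2) (by norm_num) (n+1)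
    have h11 : ((1:ℝ) - 1/2)⁻¹ = 2 := by norm_num
    rw [h11] at h10
    linarith
  have hkey : ∀ s ∈ S, ⟪p, s - v⟫_ℝ ≤ ‖s - v‖^2 := by
    intro s hsS
    have hn : ∀ n, 2*⟪(x - Z (n+1)) + qn n, s - Z (n+1)⟫_ℝ ≤ 2*‖s - Z (n+1)‖^2 + δ (n+1) := by
      intro n
      set u := Z (n+1) with hudef
      have hψs : ψ n u - δ (n+1) < ψ n s := by
        have h1 := lt_of_lt_of_le (hInfGt n) (hInfLe n s hsS)
        have h2 : ψ n u = aN (n+1) := haA n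
        rw [h2]
        linarith
      have e2 : ‖x - s‖^2 = ‖x - u‖^2 - 2*⟪x - u, s - u⟫_ℝ + ‖s - u‖^2 := by
        rw [show x - s = (x - u) - (s - u) from by abel, norm_sub_sq_real]
      have hsum1 : ∑ i ∈ range (n+1), μ i * ‖s - Z i‖^2
          = ∑ i ∈ range (n+1), μ i * ‖u - Z i‖^2
            + 2*(∑ i ∈ range (n+1), μ i * ⟪u - Z i, s - u⟫_ℝ)
            + (∑ i ∈ range (n+1), μ i) * ‖s - u‖^2 := by
        rw [Finset.sum_mul, Finset.mul_sum, ← Finset.sum_add_distrib, ← Finset.sum_add_distrib]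
        refine Finset.sum_congr rfl fun i _ => ?_
        rw [show s - Z i = (u - Z i) + (s - u) from by abel, norm_add_sq_real]
        ring
      have hinner : ⟪qn n, s - u⟫_ℝ = ∑ i ∈ range (n+1), μ i * ⟪Z i - u, s - u⟫_ℝ := by
        simp only [hqndef]
        rw [sum_inner]
        exact Finset.sum_congr rfl fun i _ => real_inner_smul_left _ _ _
      have hneg : ∑ i ∈ range (n+1), μ i * ⟪Z i - u, s - u⟫_ℝ
          = -∑ i ∈ range (n+1), μ i * ⟪u - Z i, s - u⟫_ℝ := by
        have h1 : ∀ i, μ i * ⟪Z i - u, s - u⟫_ℝ = -(μ i * ⟪u - Z i, s - u⟫_ℝ) := by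
          intro i
          rw [show Z i - u = -(u - Z i) from by abel, inner_neg_left]
          ring
        simp only [h1, Finset.sum_neg_distrib]
      have hip : ⟪(x - u) + qn n, s - u⟫_ℝ = ⟪x - u, s - u⟫_ℝ + ⟪qn n, s - u⟫_ℝ :=
        inner_add_left _ _ _
      have hcomb : ψ n s - ψ n u
          = -2*⟪x - u, s - u⟫_ℝ + 2*(∑ i ∈ range (n+1), μ i * ⟪u - Z i, s - u⟫_ℝ)
            + (1 + ∑ i ∈ range (n+1), μ i) * ‖s - u‖^2 := by
        rw [hψeq n s, hψeq n u, e2, hsum1]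
        ring
      have hE : (0:ℝ) ≤ ‖s - u‖^2 := by positivity
      have h11 : (∑ i ∈ range (n+1), μ i) * ‖s - u‖^2 ≤ ‖s - u‖^2 :=
        mul_le_of_le_one_left hE (hMle n)
      rw [hip, hinner, hneg]
      linarith [hδpos (n+1)]
    have hL : Tendsto (fun n => 2*⟪(x - Z (n+1)) + qn n, s - Z (n+1)⟫_ℝ) atTop
        (𝓝 (2*⟪p, s - v⟫_ℝ)) :=
      (hp.inner (tendsto_const_nhds.sub hv1)).const_mul 2
    have hδ0 : Tendsto (fun n => δ (n+1)) atTop (𝓝 0) := by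
      have h1 : Tendsto (fun n : ℕ => (1/16:ℝ)^n) atTop (𝓝 0) :=
        tendsto_pow_atTop_nhds_zero_of_lt_one (by norm_num) (by norm_num)
      have h2 : Tendsto (fun n : ℕ => κ * (1/16:ℝ)^n) atTop (𝓝 (κ * 0)) := h1.const_mul κ
      rw [mul_zero] at h2
      exact h2.comp (tendsto_add_atTop_nat 1)
    have hR : Tendsto (fun n => 2*‖s - Z (n+1)‖^2 + δ (n+1)) atTop (𝓝 (2*‖s - v‖^2 + 0)) :=
      ((((tendsto_const_nhds.sub hv1).norm).pow 2).const_mul 2).add hδ0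
    have hfin := le_of_tendsto_of_tendsto' hL hR hn
    linarith
  -- stage 4
  have hxv2 : ‖x - v‖^2 ≤ ‖x - z‖^2 + κ/15 := by
    have hl : Tendsto (fun n => ‖x - Z n‖^2) atTop (𝓝 (‖x - v‖^2)) :=
      ((tendsto_const_nhds.sub hv).norm).pow 2
    exact le_of_tendsto hl (Filter.Eventually.of_forall hxZ2)
  have hxve : ‖x - v‖^2 < d^2 + ε := by
    have h1 : ε' = ‖x - z‖^2 - d^2 := hε'def
    linarith only [hxv2, hκ2, hκ0, h1]
  have hxv : ‖x - v‖ ≤ d + a := by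
    refine sq_le_imp (norm_nonneg _) (by positivity) ?_
    have h1 : (d + a)^2 = d^2 + 2*d*a + a^2 := by ring
    rw [h1, ha2]
    nlinarith [mul_nonneg hd0 ha0.le]
  have hzv : ‖z - v‖ < 2*a := by
    rw [norm_sub_rev]
    linarith only [ha0, hvz]
  set c := 4*a + d with hcdef
  have hc0 : 0 < c := by positivity
  have hcne : c ≠ 0 := hc0.ne'
  set w : H := c⁻¹ • p with hwdef
  have hpn : ‖p‖ ≤ c := by
    have h1 : ‖p‖ ≤ ‖x - v‖ + ‖W + (z - v)‖ := norm_add_le _ _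
    have h2 : c = 4*a + d := hcdef
    linarith only [h1, hqnorm, hxv, hk_le_a, ha0, h2]
  have hwnorm : ‖w‖ ≤ 1 := by
    rw [hwdef, norm_smul, Real.norm_eq_abs, abs_of_pos (inv_pos.2 hc0)]
    calc c⁻¹ * ‖p‖ ≤ c⁻¹ * c := mul_le_mul_of_nonneg_left hpn (inv_pos.2 hc0).le
    _ = 1 := inv_mul_cancel₀ hcne
  have hwkey : ∀ s ∈ S, ⟪w, s - v⟫_ℝ ≤ c⁻¹ * ‖s - v‖^2 := by
    intro s hsS
    rw [hwdef, real_inner_smul_left]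
    exact mul_le_mul_of_nonneg_left (hkey s hsS) (inv_pos.2 hc0).le
  have hwmem : w ∈ proxSubdiff (fun y => infDist y S) v := by
    show ∃ σ ≥ (0:ℝ), ∃ η > (0:ℝ), ∀ y, ‖y - v‖ < η →
      infDist v S + ⟪w, y - v⟫_ℝ - σ * ‖y - v‖ ^ 2 ≤ infDist y S
    refine ⟨9*c⁻¹ + 1, by positivity, 1, one_pos, ?_⟩
    intro y hy
    rw [infDist_zero_of_mem hvS]
    rcases eq_or_ne y v with rfl|hyv
    · simp [infDist_zero_of_mem hvS]
    · set t := ‖y - v‖ with htdef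
      have ht0 : 0 < t := norm_pos_iff.2 (sub_ne_zero.2 hyv)
      have ht1 : t < 1 := hy
      obtain ⟨s, hsS, hys⟩ := (infDist_lt_iff hS).1
        (lt_add_of_pos_right (infDist y S) (by positivity : (0:ℝ) < t^2))
      rw [dist_eq_norm] at hys
      have h2 : infDist y S ≤ t := by
        rw [htdef, ← dist_eq_norm]
        exact infDist_le_dist_of_mem hvS
      have h3 : ‖y - s‖ ≤ t + t^2 := by linarith only [hys, h2]
      have h4 : ‖s - v‖ ≤ 3*t := by
        have tri : ‖s - v‖ ≤ ‖s - y‖ + ‖y - v‖ := norm_sub_le_norm_sub_add_norm_sub _ _ _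
        have hsy : ‖s - y‖ = ‖y - s‖ := norm_sub_rev _ _
        have htt : t^2 ≤ t := by nlinarith
        rw [hsy] at tri
        linarith
      have h5 : ⟪w, y - v⟫_ℝ = ⟪w, s - v⟫_ℝ + ⟪w, y - s⟫_ℝ := by
        rw [← inner_add_right]
        congr 1
        abel
      have h6 : ⟪w, s - v⟫_ℝ ≤ c⁻¹ * (9*t^2) := by
        refine le_trans (hwkey s hsS) ?_
        have h6a : ‖s - v‖^2 ≤ 9*t^2 := by nlinarith [norm_nonneg (s - v)]
        exact mul_le_mul_of_nonneg_left h6a (inv_pos.2 hc0).le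
      have h7 : ⟪w, y - s⟫_ℝ ≤ infDist y S + t^2 := by
        have h7a := real_inner_le_norm w (y - s)
        have h8 : ‖w‖ * ‖y - s‖ ≤ ‖y - s‖ := mul_le_of_le_one_left (norm_nonneg _) hwnorm
        linarith only [h7a, h8, hys]
      have hcinv : c⁻¹ * (9*t^2) = 9*c⁻¹*t^2 := by ring
      have hcit : 0 ≤ c⁻¹ * t^2 := by positivity
      linarith only [h5, h6, h7, hcinv, hcit]
  set b : H := (3*a)⁻¹ • ((v - z) - (W + (z - v))) with hbdef
  have h3a : (3*a) ≠ 0 := by positivity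
  have hbnorm : ‖b‖ ≤ 1 := by
    rw [hbdef, norm_smul, Real.norm_eq_abs, abs_of_pos (by positivity : (0:ℝ) < (3*a)⁻¹)]
    have h1 : ‖(v - z) - (W + (z - v))‖ ≤ ‖v - z‖ + ‖W + (z - v)‖ := norm_sub_le _ _
    have h3 : ‖(v - z) - (W + (z - v))‖ ≤ (70/31)*a := by
      linarith only [h1, hvz, hqnorm, hka, hk0]
    calc (3*a)⁻¹ * ‖(v - z) - (W + (z - v))‖ ≤ (3*a)⁻¹ * ((70/31)*a) :=
          mul_le_mul_of_nonneg_left h3 (by positivity)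
    _ = 70/93 := by field_simp; ring
    _ ≤ 1 := by norm_num
  have heq : x - z = c • w + (3*a) • b := by
    rw [hwdef, hbdef, smul_smul, smul_smul, mul_inv_cancel₀ hcne, mul_inv_cancel₀ h3a,
      one_smul, one_smul, hpdef]
    abel
  exact ⟨v, ⟨hvS, hxve⟩, hzv, w, hwmem, b, hbnorm, heq⟩
end

section
/- Let S be a closed subset of a Hilbert space, x ∈ H, ε > 0, and z ∈ proj_S^ε(x). Then there exists v ∈ S with ‖z - v‖ < 2√ε such that x - z ∈ N^P(S; v) + 3√ε B, where N^P denotes the proximal normal cone. -/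
/-!
A Borwein–Preiss type iteration. Starting from `v₀ = z`, `w₀ = x - z`, curvature `κ₀ = 1` and
tolerance `ε`, let `v_{n+1}` be an approximate nearest point of `S` to `v_n + w_n / κ_{n+1}` and
`w_{n+1} = w_n - κ_{n+1} (v_{n+1} - v_n)`, with `κ_n ↑ 2` and tolerances decaying geometrically.
Each `w_n` then satisfies `2⟪w_n, y - v_n⟫ < κ_n ‖y - v_n‖² + ε_n` on `S`; testing the conditions
at stages `n` and `n + 1` against `v_{n+1}` and `v_n` gives
`(κ_{n+1} - κ_n) ‖v_{n+1} - v_n‖² < ε_n + ε_{n+1}`, so `v_n` and `w_n` converge geometrically.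
In the limit the tolerance disappears and `w_∞` is a proximal normal at `v_∞`, while `z - v_∞` and
`x - z - w_∞ = w₀ - w_∞` are bounded by the geometric sums of the steps.
-/

open Metric
open scoped InnerProductSpace

/-- The proximal normal cone to `S` at `x`. -/
def proxNormalCone {H : Type*} [NormedAddCommGroup H] [InnerProductSpace ℝ H]
    (S : Set H) (x : H) : Set H :=
  {ζ | ∃ σ ≥ (0:ℝ), ∃ η > (0:ℝ), ∀ y ∈ S, ‖y - x‖ < η →
    ⟪ζ, y - x⟫_ℝ ≤ σ * ‖y - x‖ ^ 2}

open Filter Topology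

theorem exists_tendsto_dist_le_of_le_geometric {X : Type*} [MetricSpace X] [CompleteSpace X]
    {u : ℕ → X} {C q : ℝ} (hq : q < 1) (hu : ∀ n, dist (u n) (u (n + 1)) ≤ C * q ^ n) :
    ∃ a, Tendsto u atTop (𝓝 a) ∧ dist (u 0) a ≤ C / (1 - q) := by
  obtain ⟨a, ha⟩ := cauchySeq_tendsto_of_complete (cauchySeq_of_le_geometric q C hq hu)
  exact ⟨a, ha, dist_le_of_le_geometric_of_tendsto₀ q C hq hu ha⟩

section InfDist

variable {E : Type*} [SeminormedAddCommGroup E] {S : Set E}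

theorem sq_norm_sub_lt_of_lt_infDist_sq {c v y : E} {e : ℝ}
    (hv : ‖c - v‖ ^ 2 < infDist c S ^ 2 + e) (hy : y ∈ S) : ‖c - v‖ ^ 2 < ‖c - y‖ ^ 2 + e := by
  have : infDist c S ^ 2 ≤ ‖c - y‖ ^ 2 := by
    gcongr
    · exact infDist_nonneg
    · rw [← dist_eq_norm]; exact infDist_le_dist_of_mem hy
  linarith

theorem exists_sq_norm_sub_lt_infDist_sq_add (hS : S.Nonempty) (c : E) {e : ℝ} (he : 0 < e) :
    ∃ v ∈ S, ‖c - v‖ ^ 2 < infDist c S ^ 2 + e := by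
  have hlt : infDist c S < √(infDist c S ^ 2 + e) := by
    rw [Real.lt_sqrt infDist_nonneg]; linarith
  obtain ⟨v, hv, hcv⟩ := (infDist_lt_iff hS).1 hlt
  refine ⟨v, hv, ?_⟩
  rw [← dist_eq_norm, ← Real.sq_sqrt (by positivity : 0 ≤ infDist c S ^ 2 + e)]
  gcongr

end InfDist

section ApproxProxNormal

variable {H : Type*} [NormedAddCommGroup H] [InnerProductSpace ℝ H]

/-- For `w = κ • (c - v)` this says that `v` is an `ε / κ`-approximate nearest point of `S`
to `c`. -/
def IsApproxProxNormal (S : Set H) (v w : H) (κ ε : ℝ) : Prop :=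
  ∀ y ∈ S, 2 * ⟪w, y - v⟫_ℝ < κ * ‖y - v‖ ^ 2 + ε

variable {S : Set H}

theorem isApproxProxNormal_smul_sub {c v : H} {κ ε : ℝ} (hκ : 0 < κ)
    (h : ∀ y ∈ S, ‖c - v‖ ^ 2 < ‖c - y‖ ^ 2 + ε / κ) :
    IsApproxProxNormal S v (κ • (c - v)) κ ε := by
  intro y hy
  have hexp : ‖c - y‖ ^ 2 = ‖c - v‖ ^ 2 - 2 * ⟪c - v, y - v⟫_ℝ + ‖y - v‖ ^ 2 := by
    rw [← norm_sub_sq_real, sub_sub_sub_cancel_right]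
  have := mul_lt_mul_of_pos_left (h y hy) hκ
  rw [hexp, mul_add, mul_div_cancel₀ _ hκ.ne'] at this
  rw [real_inner_smul_left]
  linarith

theorem exists_isApproxProxNormal_smul_sub (hS : S.Nonempty) (c : H) {κ ε : ℝ} (hκ : 0 < κ)
    (hε : 0 < ε) : ∃ v ∈ S, IsApproxProxNormal S v (κ • (c - v)) κ ε := by
  obtain ⟨v, hv, hcv⟩ := exists_sq_norm_sub_lt_infDist_sq_add hS c (div_pos hε hκ)
  exact ⟨v, hv, isApproxProxNormal_smul_sub hκ fun y hy => sq_norm_sub_lt_of_lt_infDist_sq hcv hy⟩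

theorem IsApproxProxNormal.sq_norm_sub_lt {v v' w : H} {κ κ' ε ε' : ℝ}
    (h : IsApproxProxNormal S v w κ ε) (h' : IsApproxProxNormal S v' (w - κ' • (v' - v)) κ' ε')
    (hv : v ∈ S) (hv' : v' ∈ S) : (κ' - κ) * ‖v' - v‖ ^ 2 < ε + ε' := by
  have h₁ := h v' hv'
  have h₂ := h' v hv
  rw [← neg_sub v' v, inner_neg_right, inner_sub_left, real_inner_smul_left,
    real_inner_self_eq_norm_sq, norm_neg] at h₂
  linarith

theorem mem_proxNormalCone_of_tendsto {v w : ℕ → H} {κ ε : ℕ → ℝ} {v₀ w₀ : H} {σ : ℝ}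
    (hσ : 0 ≤ σ) (hκ : ∀ n, κ n ≤ 2 * σ) (hv : Tendsto v atTop (𝓝 v₀))
    (hw : Tendsto w atTop (𝓝 w₀)) (hε : Tendsto ε atTop (𝓝 0))
    (h : ∀ n, IsApproxProxNormal S (v n) (w n) (κ n) (ε n)) :
    w₀ ∈ proxNormalCone S v₀ := by
  refine ⟨σ, hσ, 1, one_pos, fun y hy _ => ?_⟩
  have hyv : Tendsto (fun n => y - v n) atTop (𝓝 (y - v₀)) := tendsto_const_nhds.sub hv
  have hlim : 2 * ⟪w₀, y - v₀⟫_ℝ ≤ 2 * σ * ‖y - v₀‖ ^ 2 + 0 :=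
    le_of_tendsto_of_tendsto' ((hw.inner hyv).const_mul 2)
      (((hyv.norm.pow 2).const_mul (2 * σ)).add hε)
      fun n => ((h n) y hy).le.trans (by gcongr; exact hκ n)
  linarith

theorem exists_seq_isApproxProxNormal (hS : S.Nonempty) {κ ε : ℕ → ℝ} (hκ : ∀ n, 0 < κ n)
    (hε : ∀ n, 0 < ε n) {v₀ w₀ : H} (hv₀ : v₀ ∈ S) (h₀ : IsApproxProxNormal S v₀ w₀ (κ 0) (ε 0)) :
    ∃ v w : ℕ → H, v 0 = v₀ ∧ w 0 = w₀ ∧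
      (∀ n, v n ∈ S) ∧ (∀ n, IsApproxProxNormal S (v n) (w n) (κ n) (ε n)) ∧
      ∀ n, w (n + 1) = w n - κ (n + 1) • (v (n + 1) - v n) := by
  choose next hnextS hnext using
    fun (n : ℕ) (c : H) => exists_isApproxProxNormal_smul_sub hS c (hκ (n + 1)) (hε (n + 1))
  let step (n : ℕ) (p : H × H) : H × H :=
    let c := p.1 + (κ (n + 1))⁻¹ • p.2
    (next n c, κ (n + 1) • (c - next n c))
  let p (n : ℕ) : H × H := Nat.rec (v₀, w₀) step n
  refine ⟨fun n => (p n).1, fun n => (p n).2, rfl, rfl, ?_, ?_, fun n => ?_⟩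
  · rintro (_ | n)
    exacts [hv₀, hnextS _ _]
  · rintro (_ | n)
    exacts [h₀, hnext _ _]
  · change κ (n + 1) • ((p n).1 + (κ (n + 1))⁻¹ • (p n).2 - _)
      = (p n).2 - κ (n + 1) • (_ - (p n).1)
    rw [smul_sub, smul_add, smul_inv_smul₀ (hκ (n + 1)).ne', smul_sub]
    abel

end ApproxProxNormal

theorem le_geometric_of_sq_lt {ε Δ : ℝ} {n : ℕ} (hε : 0 < ε) (hΔ : 0 ≤ Δ)
    (h : (1 / 2 : ℝ) ^ (n + 1) * Δ ^ 2 < ε * (1 / 2048) ^ n + ε * (1 / 2048) ^ (n + 1)) :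
    Δ ≤ 10 / 7 * √ε * (1 / 32) ^ n := by
  have hpow : (1 / 2 : ℝ) ^ n * (1 / 1024) ^ n = (1 / 2048) ^ n := by rw [← mul_pow]; norm_num
  have hsq : (10 / 7 * √ε * (1 / 32 : ℝ) ^ n) ^ 2 = 100 / 49 * ε * (1 / 1024) ^ n := by
    rw [mul_pow, mul_pow, Real.sq_sqrt hε.le, ← pow_mul, mul_comm n 2, pow_mul]
    norm_num
  rw [← pow_le_pow_iff_left₀ hΔ (by positivity) two_ne_zero, hsq]
  refine le_of_mul_le_mul_left (h.le.trans ?_) (by positivity : (0 : ℝ) < (1 / 2) ^ (n + 1))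
  have hε' : 0 < ε * (1 / 2048) ^ n := by positivity
  calc ε * (1 / 2048) ^ n + ε * (1 / 2048) ^ (n + 1) = 2049 / 2048 * (ε * (1 / 2048) ^ n) := by
        ring
    _ ≤ 50 / 49 * (ε * (1 / 2048) ^ n) := by linarith
    _ = (1 / 2) ^ (n + 1) * (100 / 49 * ε * (1 / 1024) ^ n) := by rw [← hpow]; ring

theorem exists_near_mem_proxNormalCone {H : Type*} [NormedAddCommGroup H]
    [InnerProductSpace ℝ H] [CompleteSpace H] {S : Set H} (hSc : IsClosed S) {x z : H} {ε : ℝ}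
    (hε : 0 < ε) (hz : z ∈ S) (hxz : ∀ y ∈ S, ‖x - z‖ ^ 2 < ‖x - y‖ ^ 2 + ε) :
    ∃ v ∈ S, ‖z - v‖ < 2 * √ε ∧ ∃ w ∈ proxNormalCone S v, ‖x - z - w‖ ≤ 3 * √ε := by
  -- `κ` increases to `2` and `e` decays so fast that the steps `‖v (n + 1) - v n‖` are at
  -- most `10 / 7 * √ε / 32 ^ n`; their sums, `320 / 217 * √ε` for `v` and twice that for `w`,
  -- are below `2 * √ε` and `3 * √ε`.
  set κ : ℕ → ℝ := fun n => 2 - (1 / 2) ^ n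
  set e : ℕ → ℝ := fun n => ε * (1 / 2048) ^ n
  have hκ : ∀ n, 0 < κ n ∧ κ n ≤ 2 := fun n => by
    have : (1 / 2 : ℝ) ^ n ≤ 1 := pow_le_one₀ (by norm_num) (by norm_num)
    constructor <;> simp only [κ] <;> linarith [pow_pos (by norm_num : (0 : ℝ) < 1 / 2) n]
  have h₀ : IsApproxProxNormal S z (x - z) (κ 0) (e 0) := by
    norm_num [κ, e]
    simpa using isApproxProxNormal_smul_sub one_pos (by simpa using hxz)
  obtain ⟨v, w, rfl, hw₀, hvS, hvw, hw⟩ :=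
    exists_seq_isApproxProxNormal ⟨z, hz⟩ (fun n => (hκ n).1) (fun n => by positivity) hz h₀
  have hdv : ∀ n, dist (v n) (v (n + 1)) ≤ 10 / 7 * √ε * (1 / 32) ^ n := fun n => by
    rw [dist_comm, dist_eq_norm]
    refine le_geometric_of_sq_lt hε (norm_nonneg _) ?_
    have := (hvw n).sq_norm_sub_lt (hw n ▸ hvw (n + 1)) (hvS n) (hvS (n + 1))
    convert this using 2
    simp only [κ]; ring
  have hdw : ∀ n, dist (w n) (w (n + 1)) ≤ 20 / 7 * √ε * (1 / 32) ^ n := fun n => by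
    rw [hw n, dist_eq_norm, sub_sub_cancel, norm_smul, Real.norm_of_nonneg (hκ _).1.le,
      ← dist_eq_norm, dist_comm]
    linarith [mul_le_mul (hκ (n + 1)).2 (hdv n) dist_nonneg zero_le_two]
  have hq : (1 / 32 : ℝ) < 1 := by norm_num
  obtain ⟨v', hvlim, hzv⟩ := exists_tendsto_dist_le_of_le_geometric hq hdv
  obtain ⟨w', hwlim, hxw⟩ := exists_tendsto_dist_le_of_le_geometric hq hdw
  have he : Tendsto e atTop (𝓝 0) := by
    simpa using (tendsto_pow_atTop_nhds_zero_of_lt_one (by norm_num) (by norm_num)).const_mul ε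
  have hsqrt : 0 < √ε := Real.sqrt_pos.2 hε
  norm_num at hzv hxw
  refine ⟨v', hSc.mem_of_tendsto hvlim (.of_forall hvS), ?_, w',
    mem_proxNormalCone_of_tendsto zero_le_one (fun n => by linarith [(hκ n).2]) hvlim hwlim he hvw,
    ?_⟩
  · rw [← dist_eq_norm]; linarith
  · rw [← hw₀, ← dist_eq_norm]; linarith

theorem stmt2_general {H : Type*} [NormedAddCommGroup H] [InnerProductSpace ℝ H] [CompleteSpace H]
    (S : Set H) (hSc : IsClosed S) (x : H) (ε : ℝ) (hε : 0 < ε)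
    (z : H) (hz : z ∈ S ∧ ‖x - z‖ ^ 2 < (infDist x S) ^ 2 + ε) :
    ∃ v ∈ S, ‖z - v‖ < 2 * Real.sqrt ε ∧
      ∃ w ∈ proxNormalCone S v, ∃ b : H, ‖b‖ ≤ 1 ∧
        x - z = w + (3 * Real.sqrt ε) • b := by
  obtain ⟨v, hv, hzv, w, hw, hxw⟩ := exists_near_mem_proxNormalCone hSc hε hz.1
    fun y hy => sq_norm_sub_lt_of_lt_infDist_sq hz.2 hy
  have hr : 0 < 3 * √ε := by positivity
  refine ⟨v, hv, hzv, w, hw, (3 * √ε)⁻¹ • (x - z - w), ?_, ?_⟩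
  · rw [norm_smul, Real.norm_of_nonneg (inv_nonneg.2 hr.le), inv_mul_le_iff₀ hr, mul_one]
    exact hxw
  · rw [smul_inv_smul₀ hr.ne']
    abel

theorem stmt2 {H : Type*} [NormedAddCommGroup H] [InnerProductSpace ℝ H] [CompleteSpace H]
    (S : Set H) (hS : S.Nonempty) (hSc : IsClosed S) (x : H) (ε : ℝ) (hε : 0 < ε)
    (z : H) (hz : z ∈ S ∧ ‖x - z‖ ^ 2 < (infDist x S) ^ 2 + ε) :
    ∃ v ∈ S, ‖z - v‖ < 2 * Real.sqrt ε ∧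
      ∃ w ∈ proxNormalCone S v, ∃ b : H, ‖b‖ ≤ 1 ∧
        x - z = w + (3 * Real.sqrt ε) • b :=
  stmt2_general S hSc x ε hε z hz
end

section
/- Let S be a ρ-uniformly prox-regular subset of a Hilbert space H and let x ∈ H with d_S(x) < ρ. If (x_n) converges to x, (ε_n) is a sequence of positive reals converging to 0, and z_n ∈ proj_S^{ε_n}(x_n) for all n, then z_n converges strongly to proj_S(x), the (well-defined) metric projection of x onto S. -/
open Metric Filter
open scoped InnerProductSpace Topology

theorem stmt3 {H : Type*} [NormedAddCommGroup H] [InnerProductSpace ℝ H] [CompleteSpace H]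
    (S : Set H) (hS : S.Nonempty) (hSc : IsClosed S) (ρ : ℝ) (hρ : 0 < ρ)
    (hreg : ∀ x ∈ S, ∀ ζ ∈ proxNormalCone S x, ∀ x' ∈ S,
      ⟪ζ, x' - x⟫_ℝ ≤ ‖ζ‖ / (2 * ρ) * ‖x' - x‖ ^ 2)
    (x : H) (hx : infDist x S < ρ)
    (p : H) (hp : p ∈ S ∧ ‖x - p‖ = infDist x S)
    (xs : ℕ → H) (hxs : Tendsto xs atTop (𝓝 x))
    (ε : ℕ → ℝ) (hεpos : ∀ n, 0 < ε n) (hε0 : Tendsto ε atTop (𝓝 0))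
    (z : ℕ → H) (hz : ∀ n, z n ∈ S ∧ ‖xs n - z n‖ ^ 2 < (infDist (xs n) S) ^ 2 + ε n) :
    Tendsto z atTop (𝓝 p) := by
  obtain ⟨hpS, hpd⟩ := hp
  set d := infDist x S with hd
  clear_value d
  have hd0 : 0 ≤ d := hd ▸ infDist_nonneg
  have hdρ : 0 < 1 - d / ρ := by
    have : d / ρ < 1 := (div_lt_one hρ).2 hx
    linarith
  -- `x - p` is a proximal normal at `p`
  have hcone : x - p ∈ proxNormalCone S p := by
    refine ⟨1/2, by norm_num, 1, one_pos, fun y hy _ => ?_⟩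
    have h1 : ‖x - p‖ ≤ ‖x - y‖ := by
      rw [hpd, hd]
      simpa [dist_eq_norm] using infDist_le_dist_of_mem hy
    have h2 : ‖x - y‖ ^ 2 = ‖x - p‖ ^ 2 - 2 * ⟪x - p, y - p⟫_ℝ + ‖y - p‖ ^ 2 := by
      rw [show x - y = (x - p) - (y - p) by abel]
      exact norm_sub_sq_real _ _
    nlinarith [norm_nonneg (x - p), norm_nonneg (x - y)]
  -- quantitative estimate from prox-regularity
  have key : ∀ w ∈ S, (1 - d / ρ) * ‖w - p‖ ^ 2 ≤ ‖x - w‖ ^ 2 - d ^ 2 := by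
    intro w hw
    have h3 := hreg p hpS (x - p) hcone w hw
    rw [hpd] at h3
    have h2 : ‖x - w‖ ^ 2 = d ^ 2 - 2 * ⟪x - p, w - p⟫_ℝ + ‖w - p‖ ^ 2 := by
      rw [show x - w = (x - p) - (w - p) by abel, norm_sub_sq_real, hpd]
    have hfield : d / (2 * ρ) = d / ρ / 2 := by
      rw [div_div, mul_comm]
    nlinarith [sq_nonneg ‖w - p‖]
  set a : ℕ → ℝ := fun n => ‖x - xs n‖ + Real.sqrt (infDist (xs n) S ^ 2 + ε n) with ha_def
  clear_value a
  have hbound : ∀ n, ‖z n - p‖ ^ 2 ≤ (a n ^ 2 - d ^ 2) * (1 - d / ρ)⁻¹ := by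
    intro n
    obtain ⟨hzS, hzn⟩ := hz n
    have h1 : ‖xs n - z n‖ ≤ Real.sqrt (infDist (xs n) S ^ 2 + ε n) := by
      rw [show ‖xs n - z n‖ = Real.sqrt (‖xs n - z n‖ ^ 2) from
        (Real.sqrt_sq (norm_nonneg _)).symm]
      exact Real.sqrt_le_sqrt hzn.le
    have h2 : ‖x - z n‖ ≤ a n := by
      calc ‖x - z n‖ ≤ ‖x - xs n‖ + ‖xs n - z n‖ := by
            simpa using norm_sub_le_norm_sub_add_norm_sub x (xs n) (z n)
        _ ≤ a n := by simp only [ha_def]; exact add_le_add le_rfl h1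
    have h3 : ‖x - z n‖ ^ 2 ≤ a n ^ 2 := by nlinarith [norm_nonneg (x - z n)]
    have h4 := key (z n) hzS
    rw [← div_eq_mul_inv, le_div_iff₀ hdρ]
    nlinarith [h3, h4]
  have hdist : Tendsto (fun n => infDist (xs n) S) atTop (𝓝 d) := by
    rw [hd]
    exact ((continuous_infDist_pt S).tendsto x).comp hxs
  have hnx : Tendsto (fun n => ‖x - xs n‖) atTop (𝓝 0) := by
    have := (tendsto_iff_norm_sub_tendsto_zero.1 hxs)
    simpa [norm_sub_rev] using this
  have hsqrt : Tendsto (fun n => Real.sqrt (infDist (xs n) S ^ 2 + ε n)) atTop (𝓝 d) := by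
    have h1 : Tendsto (fun n => infDist (xs n) S ^ 2 + ε n) atTop (𝓝 (d ^ 2 + 0)) :=
      (hdist.pow 2).add hε0
    have h2 := (Real.continuous_sqrt.tendsto (d ^ 2 + 0)).comp h1
    simpa [Real.sqrt_sq hd0, Function.comp_def] using h2
  have ha : Tendsto a atTop (𝓝 d) := by
    simp only [ha_def]
    simpa using hnx.add hsqrt
  have hlim0 : Tendsto (fun n => (a n ^ 2 - d ^ 2) * (1 - d / ρ)⁻¹) atTop (𝓝 0) := by
    have := ((ha.pow 2).sub_const (d ^ 2)).mul_const (1 - d / ρ)⁻¹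
    simpa using this
  have hsq : Tendsto (fun n => ‖z n - p‖ ^ 2) atTop (𝓝 0) :=
    squeeze_zero (fun n => sq_nonneg _) hbound hlim0
  have hnorm : Tendsto (fun n => ‖z n - p‖) atTop (𝓝 0) := by
    have h2 := (Real.continuous_sqrt.tendsto 0).comp hsq
    have heq : ((fun t => Real.sqrt t) ∘ fun n => ‖z n - p‖ ^ 2) = fun n => ‖z n - p‖ :=
      funext fun n => Real.sqrt_sq (norm_nonneg _)
    rw [Real.sqrt_zero] at h2
    rwa [heq] at h2
  rw [tendsto_iff_norm_sub_tendsto_zero]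
  exact hnorm
end

section
/- For any closed set S in a Hilbert space, any x ∉ S with nonempty projection set Proj_S(x), and any z ∈ Proj_S(x), one has x - z ∈ d_S(x) ∂_P d_S(z), where ∂_P d_S is the proximal subdifferential of the distance function. -/
open Metric
open scoped InnerProductSpace

/-!
Write `d = d_S(x) = ‖x - z‖`. Expanding `‖x - y‖²` around `z` gives
`2⟪x - z, y - z⟫ - ‖y - z‖² = d² - ‖x - y‖²`, and `d² - t² ≤ 2d (d - t)` since the difference
is `(d - t)²`. With `t = ‖x - y‖` the triangle inequality `d - ‖x - y‖ ≤ d_S(y)` then yields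
the proximal subgradient inequality for `(x - z) / d` with constant `σ = 1 / (2d)`, for every `y`.
-/

section

variable {H : Type*} [NormedAddCommGroup H] [InnerProductSpace ℝ H]

theorem mem_proxSubdiff_of_forall_le {f : H → ℝ} {x ζ : H} {σ : ℝ} (hσ : 0 ≤ σ)
    (h : ∀ y, f x + ⟪ζ, y - x⟫_ℝ - σ * ‖y - x‖ ^ 2 ≤ f y) : ζ ∈ proxSubdiff f x :=
  ⟨σ, hσ, 1, one_pos, fun y _ => h y⟩

theorem two_inner_sub_sub_norm_sq_le_infDist_mul {S : Set H} {x z : H}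
    (hz : ‖x - z‖ = infDist x S) (y : H) :
    2 * ⟪x - z, y - z⟫_ℝ - ‖y - z‖ ^ 2 ≤ 2 * infDist x S * infDist y S := by
  set d := infDist x S
  have hexpand : ‖x - y‖ ^ 2 = d ^ 2 - 2 * ⟪x - z, y - z⟫_ℝ + ‖y - z‖ ^ 2 := by
    rw [← hz, ← norm_sub_sq_real, sub_sub_sub_cancel_right]
  have htriangle : d - ‖x - y‖ ≤ infDist y S := by
    rw [← dist_eq_norm]
    linarith [infDist_le_infDist_add_dist (x := x) (y := y) (s := S)]
  have hd : 0 ≤ d := infDist_nonneg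
  nlinarith [sq_nonneg (d - ‖x - y‖), mul_le_mul_of_nonneg_left htriangle hd]

end

theorem stmt4_general {H : Type*} [NormedAddCommGroup H] [InnerProductSpace ℝ H]
    (S : Set H) (x : H) (hx : x ∉ S)
    (z : H) (hzS : z ∈ S) (hz : ‖x - z‖ = infDist x S) :
    ∃ w ∈ proxSubdiff (fun y => infDist y S) z, x - z = (infDist x S) • w := by
  set d := infDist x S
  have hd : 0 < d := hz ▸ norm_pos_iff.mpr (sub_ne_zero.mpr (ne_of_mem_of_not_mem hzS hx).symm)
  refine ⟨d⁻¹ • (x - z), ?_, by rw [smul_inv_smul₀ hd.ne']⟩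
  refine mem_proxSubdiff_of_forall_le (σ := 1 / (2 * d)) (by positivity) fun y => ?_
  have key := two_inner_sub_sub_norm_sq_le_infDist_mul hz y
  rw [infDist_zero_of_mem hzS, real_inner_smul_left]
  rw [← div_le_iff₀' (by positivity)] at key
  calc 0 + d⁻¹ * ⟪x - z, y - z⟫_ℝ - 1 / (2 * d) * ‖y - z‖ ^ 2
      = (2 * ⟪x - z, y - z⟫_ℝ - ‖y - z‖ ^ 2) / (2 * d) := by field_simp; ring
    _ ≤ infDist y S := key

theorem stmt4 {H : Type*} [NormedAddCommGroup H] [InnerProductSpace ℝ H] [CompleteSpace H]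
    (S : Set H) (hS : S.Nonempty) (hSc : IsClosed S) (x : H) (hx : x ∉ S)
    (z : H) (hzS : z ∈ S) (hz : ‖x - z‖ = infDist x S) :
    ∃ w ∈ proxSubdiff (fun y => infDist y S) z, x - z = (infDist x S) • w :=
  stmt4_general S x hx z hzS hz
end

section
/- Let {C_n}_{n∈ℕ} ∪ {C} be a family of nonempty closed subsets of a Hilbert space H that is equi-uniformly subsmooth, and suppose d_{C_n}(x) → 0 for every x ∈ C. Let α_n → α in ℝ, y_n → y strongly with y_n ∈ C_n and y ∈ C. Then for every ξ ∈ H, limsup_{n→∞} σ(ξ, α_n ∂d_{C_n}(y_n)) ≤ σ(ξ, α ∂d_C(y)), where ∂ denotes the Clarke subdifferential and σ the support function. -/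
open Metric Filter Set
open scoped InnerProductSpace Topology Pointwise

/-- The Clarke generalized directional derivative of `f` at `x` in direction `h`. -/
noncomputable def clarkeDirDeriv {H : Type*} [NormedAddCommGroup H] [InnerProductSpace ℝ H]
    (f : H → ℝ) (x : H) (h : H) : ℝ :=
  Filter.limsup (fun p : ℝ × H => (f (p.2 + p.1 • h) - f p.2) / p.1)
    ((𝓝[>] (0:ℝ)) ×ˢ 𝓝 x)

/-- The Clarke subdifferential of a (locally Lipschitz) function `f` at `x`. -/
noncomputable def clarkeSubdiff {H : Type*} [NormedAddCommGroup H] [InnerProductSpace ℝ H]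
    (f : H → ℝ) (x : H) : Set H :=
  {ζ | ∀ h : H, ⟪ζ, h⟫_ℝ ≤ clarkeDirDeriv f x h}

/-- The Clarke normal cone to `S` at `x`, as the closed cone generated by the Clarke
subdifferential of the distance function. -/
noncomputable def clarkeNormalCone {H : Type*} [NormedAddCommGroup H] [InnerProductSpace ℝ H]
    (S : Set H) (x : H) : Set H :=
  closure {ζ : H | ∃ c : ℝ, 0 ≤ c ∧
    ∃ w ∈ clarkeSubdiff (fun y => infDist y S) x, ζ = c • w}

set_option maxHeartbeats 1000000

section Aux

variable {H : Type*} [NormedAddCommGroup H] [InnerProductSpace ℝ H]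

lemma abs_infDist_sub_le (S : Set H) (u z : H) :
    |infDist u S - infDist z S| ≤ ‖u - z‖ := by
  rw [abs_sub_le_iff]
  constructor
  · have := Metric.infDist_le_infDist_add_dist (x := u) (y := z) (s := S)
    rw [dist_eq_norm] at this; linarith
  · have := Metric.infDist_le_infDist_add_dist (x := z) (y := u) (s := S)
    rw [dist_eq_norm, norm_sub_rev] at this; linarith

lemma abs_quot_le (S : Set H) (h : H) {t : ℝ} (ht : 0 < t) (z : H) :
    |(infDist (z + t • h) S - infDist z S) / t| ≤ ‖h‖ := by
  rw [abs_div, abs_of_pos ht, div_le_iff₀ ht]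
  calc |infDist (z + t • h) S - infDist z S| ≤ ‖z + t • h - z‖ := by
        simpa using abs_infDist_sub_le S (z + t • h) z
    _ = ‖t • h‖ := by congr 1; abel
    _ = t * ‖h‖ := by rw [norm_smul, Real.norm_eq_abs, abs_of_pos ht]
    _ = ‖h‖ * t := mul_comm _ _

lemma ev_pos (x : H) : ∀ᶠ p : ℝ × H in (𝓝[>] (0:ℝ)) ×ˢ 𝓝 x, 0 < p.1 :=
  Filter.Eventually.prod_inl (eventually_mem_nhdsWithin.mono fun _ ht => ht) _

lemma ev_abs_le (S : Set H) (x h : H) :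
    ∀ᶠ p : ℝ × H in (𝓝[>] (0:ℝ)) ×ˢ 𝓝 x,
      |(infDist (p.2 + p.1 • h) S - infDist p.2 S) / p.1| ≤ ‖h‖ :=
  (ev_pos x).mono fun p hp => abs_quot_le S h hp p.2

/-- general helper : limsup of composition along a tendsto map is at most limsup. -/
lemma limsup_comp_le {α α' : Type*} {F : Filter α} {G : Filter α'} [G.NeBot]
    {Q : α → ℝ} {m : α' → α} (hm : Tendsto m G F) {c : ℝ}
    (hb : ∀ᶠ p in F, |Q p| ≤ c) (hb' : ∀ᶠ p in G, |Q (m p)| ≤ c) :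
    limsup (fun p => Q (m p)) G ≤ limsup Q F := by
  have e : limsup (fun p => Q (m p)) G = limsup Q (Filter.map m G) := by
    rw [Filter.limsup, Filter.limsup, Filter.map_map]
    rfl
  rw [e]
  refine limsup_le_limsup_of_le hm ?_ ?_
  · exact isCoboundedUnder_le_of_eventually_le _
      (eventually_map.mpr (hb'.mono fun p hp => (abs_le.1 hp).1))
  · exact isBoundedUnder_of_eventually_le (hb.mono fun p hp => (abs_le.1 hp).2)

lemma slice_le (S : Set H) (x h : H) :
    limsup (fun t : ℝ => (infDist (x + t • h) S - infDist x S) / t) (𝓝[>] (0:ℝ))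
      ≤ clarkeDirDeriv (fun u => infDist u S) x h := by
  have hm : Tendsto (fun t : ℝ => ((t, x) : ℝ × H)) (𝓝[>] (0:ℝ)) ((𝓝[>] (0:ℝ)) ×ˢ 𝓝 x) :=
    tendsto_id.prodMk tendsto_const_nhds
  exact limsup_comp_le (Q := fun p : ℝ × H => (infDist (p.2 + p.1 • h) S - infDist p.2 S) / p.1)
    (m := fun t : ℝ => ((t, x) : ℝ × H)) hm (ev_abs_le S x h)
    (eventually_mem_nhdsWithin.mono fun t ht => abs_quot_le S h ht x)

lemma D_le_norm (S : Set H) (x h : H) :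
    clarkeDirDeriv (fun u => infDist u S) x h ≤ ‖h‖ := by
  apply limsup_le_of_le
  · exact isCoboundedUnder_le_of_eventually_le _
      ((ev_abs_le S x h).mono fun p hp => (abs_le.1 hp).1)
  · exact (ev_abs_le S x h).mono fun p hp => (abs_le.1 hp).2

lemma D_nonneg (S : Set H) {x : H} (hx : x ∈ S) (h : H) :
    0 ≤ clarkeDirDeriv (fun u => infDist u S) x h := by
  refine le_trans ?_ (slice_le S x h)
  apply le_limsup_of_frequently_le
  · refine (eventually_mem_nhdsWithin.mono ?_).frequently
    intro t ht
    rw [infDist_zero_of_mem hx, sub_zero]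
    exact div_nonneg infDist_nonneg (le_of_lt ht)
  · exact isBoundedUnder_of_eventually_le
      ((eventually_mem_nhdsWithin.mono fun t ht => abs_quot_le S h ht x).mono
        fun t ht => (abs_le.1 ht).2)

lemma D_zero (S : Set H) (x : H) :
    clarkeDirDeriv (fun u => infDist u S) x 0 = 0 := by
  rw [clarkeDirDeriv]
  have : (fun p : ℝ × H => (infDist (p.2 + p.1 • (0:H)) S - infDist p.2 S) / p.1)
      = fun _ => (0:ℝ) := by
    funext p; simp
  rw [this, limsup_const]

lemma zero_mem_subdiff (S : Set H) {x : H} (hx : x ∈ S) :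
    (0 : H) ∈ clarkeSubdiff (fun u => infDist u S) x := by
  intro h
  rw [inner_zero_left]
  exact D_nonneg S hx h

lemma norm_le_one (S : Set H) {x ζ : H}
    (hζ : ζ ∈ clarkeSubdiff (fun u => infDist u S) x) : ‖ζ‖ ≤ 1 := by
  have h1 : ⟪ζ, ζ⟫_ℝ ≤ ‖ζ‖ := (hζ ζ).trans (D_le_norm S x ζ)
  rw [real_inner_self_eq_norm_sq] at h1
  nlinarith [norm_nonneg ζ]

lemma subdiff_subset_cone (S : Set H) (x : H) :
    clarkeSubdiff (fun u => infDist u S) x ⊆ clarkeNormalCone S x := fun ζ hζ =>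
  subset_closure ⟨1, zero_le_one, ζ, hζ, (one_smul ℝ ζ).symm⟩

lemma zero_mem_cone (S : Set H) {x : H} (hx : x ∈ S) :
    (0 : H) ∈ clarkeNormalCone S x :=
  subset_closure ⟨0, le_refl 0, 0, zero_mem_subdiff S hx, by simp⟩

lemma D_add (S : Set H) (x u v : H) :
    clarkeDirDeriv (fun z => infDist z S) x (u + v)
      ≤ clarkeDirDeriv (fun z => infDist z S) x u
        + clarkeDirDeriv (fun z => infDist z S) x v := by
  set F := (𝓝[>] (0:ℝ)) ×ˢ 𝓝 x with hF
  set Qu := fun p : ℝ × H => (infDist (p.2 + p.1 • u) S - infDist p.2 S) / p.1 with hQu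
  set Qv := fun p : ℝ × H => (infDist (p.2 + p.1 • v) S - infDist p.2 S) / p.1 with hQv
  set φ : ℝ × H → ℝ × H := fun p => (p.1, p.2 + p.1 • v) with hφ
  have hident : (fun p : ℝ × H => (infDist (p.2 + p.1 • (u + v)) S - infDist p.2 S) / p.1)
      = fun p => Qu (φ p) + Qv p := by
    funext p
    simp only [hQu, hQv, hφ]
    rw [← add_div]
    congr 1
    have e : p.2 + p.1 • (u + v) = p.2 + p.1 • v + p.1 • u := by
      rw [smul_add]; abel
    rw [e]; ring
  have hφt : Tendsto φ F F := by
    refine Tendsto.prodMk tendsto_fst ?_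
    have h1 : Tendsto (fun p : ℝ × H => p.1) F (𝓝 (0:ℝ)) :=
      tendsto_fst.mono_right nhdsWithin_le_nhds
    have h2 : Tendsto (fun p : ℝ × H => p.2 + p.1 • v) F (𝓝 (x + (0:ℝ) • v)) :=
      tendsto_snd.add (h1.smul_const v)
    simpa using h2
  have hevφ : ∀ᶠ p : ℝ × H in F, |Qu (φ p)| ≤ ‖u‖ :=
    (ev_pos x).mono fun p hp => abs_quot_le S u hp (p.2 + p.1 • v)
  rw [clarkeDirDeriv, hident, ← hF]
  have step : limsup (fun p => Qu (φ p) + Qv p) F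
      ≤ limsup (fun p => Qu (φ p)) F + limsup Qv F := by
    have b1 : IsBoundedUnder (· ≥ ·) F fun p => Qu (φ p) :=
      isBoundedUnder_of_eventually_ge (hevφ.mono fun p hp => (abs_le.1 hp).1)
    have b2 : IsBoundedUnder (· ≤ ·) F fun p => Qu (φ p) :=
      isBoundedUnder_of_eventually_le (hevφ.mono fun p hp => (abs_le.1 hp).2)
    have b3 : IsCoboundedUnder (· ≤ ·) F Qv :=
      isCoboundedUnder_le_of_eventually_le _
        ((ev_abs_le S x v).mono fun p hp => (abs_le.1 hp).1)
    have b4 : IsBoundedUnder (· ≤ ·) F Qv :=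
      isBoundedUnder_of_eventually_le ((ev_abs_le S x v).mono fun p hp => (abs_le.1 hp).2)
    exact limsup_add_le b1 b2 b3 b4
  refine step.trans (add_le_add ?_ ?_)
  · exact limsup_comp_le (Q := Qu) (m := φ) hφt (ev_abs_le S x u) hevφ
  · exact le_rfl

lemma tendsto_mul_pos {c : ℝ} (hc : 0 < c) :
    Tendsto (fun t : ℝ => c * t) (𝓝[>] (0:ℝ)) (𝓝[>] (0:ℝ)) := by
  apply tendsto_nhdsWithin_of_tendsto_nhds_of_eventually_within
  · have : Tendsto (fun t : ℝ => c * t) (𝓝 (0:ℝ)) (𝓝 (c * 0)) :=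
      (continuous_const.mul continuous_id).tendsto 0
    simpa using this.mono_left nhdsWithin_le_nhds
  · exact eventually_mem_nhdsWithin.mono fun t ht => mul_pos hc ht

lemma D_smul (S : Set H) (x h : H) {c : ℝ} (hc : 0 < c) :
    clarkeDirDeriv (fun z => infDist z S) x (c • h)
      = c * clarkeDirDeriv (fun z => infDist z S) x h := by
  set F := (𝓝[>] (0:ℝ)) ×ˢ 𝓝 x with hF
  set Qh := fun p : ℝ × H => (infDist (p.2 + p.1 • h) S - infDist p.2 S) / p.1 with hQh
  set ψ : ℝ × H → ℝ × H := fun p => (c * p.1, p.2) with hψ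
  have hident : (fun p : ℝ × H => (infDist (p.2 + p.1 • (c • h)) S - infDist p.2 S) / p.1)
      = fun p => c * Qh (ψ p) := by
    funext p
    simp only [hQh, hψ]
    rcases eq_or_ne p.1 0 with h0 | h0
    · simp [h0]
    · have e : p.2 + p.1 • (c • h) = p.2 + (c * p.1) • h := by
        rw [smul_smul, mul_comm]
      rw [e, mul_div_assoc', mul_div_mul_left _ _ hc.ne']
  have hψt : Tendsto ψ F F :=
    ((tendsto_mul_pos hc).comp tendsto_fst).prodMk tendsto_snd
  have hψmap : Filter.map ψ F = F := by
    refine le_antisymm hψt ?_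
    set ψi : ℝ × H → ℝ × H := fun p => (c⁻¹ * p.1, p.2) with hψi
    have hψit : Tendsto ψi F F :=
      ((tendsto_mul_pos (inv_pos.2 hc)).comp tendsto_fst).prodMk tendsto_snd
    have hcomp : ψ ∘ ψi = id := by
      funext p
      simp only [hψ, hψi, Function.comp_apply, id_eq, mul_inv_cancel_left₀ hc.ne']
    calc F = Filter.map (ψ ∘ ψi) F := by rw [hcomp, Filter.map_id]
      _ = Filter.map ψ (Filter.map ψi F) := (Filter.map_map).symm
      _ ≤ Filter.map ψ F := map_mono hψit
  have hb : ∀ᶠ p : ℝ × H in F, |Qh (ψ p)| ≤ ‖h‖ :=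
    (ev_pos x).mono fun p hp => abs_quot_le S h (mul_pos hc hp) p.2
  rw [clarkeDirDeriv, hident, ← hF]
  have e2 : limsup (fun p => c * Qh (ψ p)) F = c * limsup (fun p => Qh (ψ p)) F := by
    have hmono : Monotone fun r : ℝ => c * r := fun s r hsr =>
      mul_le_mul_of_nonneg_left hsr hc.le
    have b2 : IsBoundedUnder (· ≤ ·) F fun p => Qh (ψ p) :=
      isBoundedUnder_of_eventually_le (hb.mono fun p hp => (abs_le.1 hp).2)
    have b3 : IsCoboundedUnder (· ≤ ·) F fun p => Qh (ψ p) :=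
      isCoboundedUnder_le_of_eventually_le _ (hb.mono fun p hp => (abs_le.1 hp).1)
    exact (hmono.map_limsup_of_continuousAt (fun p => Qh (ψ p))
      ((continuous_const.mul continuous_id).continuousAt) b2 b3).symm
  rw [e2]
  congr 1
  have e3 : limsup (fun p => Qh (ψ p)) F = limsup Qh (Filter.map ψ F) := by
    rw [Filter.limsup, Filter.limsup, Filter.map_map]
    rfl
  rw [e3, hψmap, hQh, hF, clarkeDirDeriv]

lemma exists_subgrad (S : Set H) [CompleteSpace H] {x : H} (hx : x ∈ S) (v : H) :
    ∃ ζ ∈ clarkeSubdiff (fun u => infDist u S) x,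
      ⟪ζ, v⟫_ℝ = clarkeDirDeriv (fun u => infDist u S) x v := by
  by_cases hv : v = 0
  · refine ⟨0, zero_mem_subdiff S hx, ?_⟩
    rw [hv, inner_zero_left]
    exact (D_zero S x).symm
  · set D : H → ℝ := clarkeDirDeriv (fun u => infDist u S) x with hD
    have hadd : ∀ z w : H, D (z + w) ≤ D z + D w := fun z w => D_add S x z w
    have hhom : ∀ c : ℝ, 0 < c → ∀ z : H, D (c • z) = c * D z := fun c hc z => D_smul S x z hc
    set f : H →ₗ.[ℝ] ℝ := LinearPMap.mkSpanSingleton v (D v) hv with hf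
    have hfle : ∀ p : f.domain, f p ≤ D p := by
      intro p
      rcases Submodule.mem_span_singleton.1 p.2 with ⟨c, hc⟩
      have hmem : c • v ∈ f.domain := by rw [hc]; exact p.2
      have hp : p = ⟨c • v, hmem⟩ := Subtype.ext hc.symm
      rw [hp]
      have happ : f ⟨c • v, hmem⟩ = c • (D v) := LinearPMap.mkSpanSingleton'_apply v (D v) _ c hmem
      rw [happ, smul_eq_mul]
      show c * D v ≤ D (c • v)
      rcases lt_trichotomy c 0 with h0 | h0 | h0
      · have e1 : D ((-c) • v) = (-c) * D v := hhom (-c) (neg_pos.2 h0) v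
        have e2 : (0:ℝ) ≤ D (c • v) + D ((-c) • v) := by
          have : (0:ℝ) = D (c • v + (-c) • v) := by
            rw [← add_smul, add_neg_cancel, zero_smul]
            exact (D_zero S x).symm
          rw [this] at *
          exact hadd (c • v) ((-c) • v)
        rw [e1] at e2; linarith
      · simp only [h0, zero_smul, zero_mul]
        rw [hD]
        exact (D_zero S x).ge
      · rw [hhom c h0 v]
    obtain ⟨g, hg1, hg2⟩ := exists_extension_of_le_sublinear f D hhom hadd hfle
    have hgabs : ∀ z : H, ‖g z‖ ≤ 1 * ‖z‖ := by
      intro z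
      rw [Real.norm_eq_abs, one_mul, abs_le]
      constructor
      · have h1 : g (-z) ≤ D (-z) := hg2 (-z)
        have h2 : D (-z) ≤ ‖z‖ := by simpa using D_le_norm S x (-z)
        rw [map_neg] at h1
        linarith
      · exact (hg2 z).trans (D_le_norm S x z)
    set G : H →L[ℝ] ℝ := LinearMap.mkContinuous g 1 hgabs with hG
    refine ⟨(InnerProductSpace.toDual ℝ H).symm G, ?_, ?_⟩
    · intro z
      rw [InnerProductSpace.toDual_symm_apply]
      exact hg2 z
    · rw [InnerProductSpace.toDual_symm_apply]
      have hval : g v = D v := by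
        have h1 := hg1 ⟨v, Submodule.mem_span_singleton_self v⟩
        have h2 : f ⟨v, Submodule.mem_span_singleton_self v⟩ = D v :=
          LinearPMap.mkSpanSingleton_apply ℝ ℝ hv (D v)
        rw [h1, h2]
      exact hval

lemma bddAbove_img (ξ : H) (c : ℝ) (S : Set H) (x : H) :
    BddAbove ((fun z => ⟪ξ, z⟫_ℝ) '' (c • clarkeSubdiff (fun u => infDist u S) x)) := by
  refine ⟨|c| * ‖ξ‖, ?_⟩
  rintro r ⟨z, hz, rfl⟩
  rw [mem_smul_set] at hz
  rcases hz with ⟨w, hw, rfl⟩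
  calc ⟪ξ, c • w⟫_ℝ ≤ ‖ξ‖ * ‖c • w‖ := real_inner_le_norm ξ (c • w)
    _ = ‖ξ‖ * (|c| * ‖w‖) := by rw [norm_smul, Real.norm_eq_abs]
    _ ≤ ‖ξ‖ * (|c| * 1) := by
        gcongr
        exact norm_le_one S hw
    _ = |c| * ‖ξ‖ := by ring

end Aux

theorem stmt15 {H : Type*} [NormedAddCommGroup H] [InnerProductSpace ℝ H] [CompleteSpace H]
    (Cn : ℕ → Set H) (C : Set H)
    (hne : ∀ n, (Cn n).Nonempty) (hc : ∀ n, IsClosed (Cn n))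
    (hCne : C.Nonempty) (hCc : IsClosed C)
    (hsub : ∀ ε > (0:ℝ), ∃ δ > (0:ℝ),
      ∀ S ∈ insert C (Set.range Cn), ∀ x₁ ∈ S, ∀ x₂ ∈ S, ‖x₁ - x₂‖ ≤ δ →
        ∀ ξ₁ ∈ clarkeNormalCone S x₁ ∩ Metric.closedBall 0 1,
        ∀ ξ₂ ∈ clarkeNormalCone S x₂ ∩ Metric.closedBall 0 1,
          -ε * ‖x₂ - x₁‖ ≤ ⟪ξ₂ - ξ₁, x₂ - x₁⟫_ℝ)
    (hdist : ∀ x ∈ C, Tendsto (fun n => infDist x (Cn n)) atTop (𝓝 0))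
    (α : ℕ → ℝ) (a : ℝ) (hα : Tendsto α atTop (𝓝 a))
    (y : ℕ → H) (yl : H) (hy : ∀ n, y n ∈ Cn n) (hyl : yl ∈ C)
    (hyt : Tendsto y atTop (𝓝 yl)) (ξ : H) :
    limsup (fun n => sSup ((fun z => ⟪ξ, z⟫_ℝ) ''
        (α n • clarkeSubdiff (fun u => infDist u (Cn n)) (y n)))) atTop
      ≤ sSup ((fun z => ⟪ξ, z⟫_ℝ) '' (a • clarkeSubdiff (fun u => infDist u C) yl)) := by
  obtain ⟨ζ, hζm, hζv⟩ := exists_subgrad C hyl (a • ξ)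
  set v : H := a • ξ with hv
  set Dv : ℝ := clarkeDirDeriv (fun u => infDist u C) yl v with hDv
  set M : ℝ := sSup ((fun z => ⟪ξ, z⟫_ℝ) '' (a • clarkeSubdiff (fun u => infDist u C) yl))
    with hMdef
  set L : ℕ → ℝ := fun n => sSup ((fun z => ⟪ξ, z⟫_ℝ) ''
      (α n • clarkeSubdiff (fun u => infDist u (Cn n)) (y n))) with hLdef
  -- RHS bound from Hahn-Banach element
  have hDM : Dv ≤ M := by
    have hmem : ⟪ξ, a • ζ⟫_ℝ ∈
        ((fun z => ⟪ξ, z⟫_ℝ) '' (a • clarkeSubdiff (fun u => infDist u C) yl)) :=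
      mem_image_of_mem _ (smul_mem_smul_set hζm)
    have he : ⟪ξ, a • ζ⟫_ℝ = ⟪ζ, v⟫_ℝ := by
      rw [hv, real_inner_smul_right, real_inner_smul_right, real_inner_comm]
    have := le_csSup (bddAbove_img ξ a C yl) hmem
    rw [he, hζv] at this
    exact this
  -- nonnegativity of each L n
  have hL0 : ∀ n, 0 ≤ L n := by
    intro n
    calc (0:ℝ) = ⟪ξ, α n • (0:H)⟫_ℝ := by simp
      _ ≤ L n := le_csSup (bddAbove_img ξ (α n) (Cn n) (y n))
        (mem_image_of_mem _ (smul_mem_smul_set (zero_mem_subdiff (Cn n) (hy n))))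
  -- main eventual estimate
  have main : ∀ ε : ℝ, 0 < ε → ε ≤ 1 →
      ∀ᶠ n in atTop, L n ≤ Dv + ε * (7 + 2*‖v‖ + ‖ξ‖) := by
    intro ε hε hε1
    obtain ⟨δ, hδ0, hδ⟩ := hsub ε hε
    -- choose a good small t
    have E1 : ∀ᶠ t : ℝ in 𝓝[>] 0, 0 < t := eventually_mem_nhdsWithin.mono fun t ht => ht
    have E2 : ∀ᶠ t : ℝ in 𝓝[>] 0, t * (2*‖v‖+1) < δ := by
      have htend : Tendsto (fun t : ℝ => t * (2*‖v‖+1)) (𝓝[>] (0:ℝ)) (𝓝 0) := by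
        have h1 : Tendsto (fun t : ℝ => t * (2*‖v‖+1)) (𝓝 (0:ℝ)) (𝓝 (0 * (2*‖v‖+1))) :=
          (continuous_id.mul continuous_const).tendsto 0
        simpa using h1.mono_left nhdsWithin_le_nhds
      exact htend.eventually_lt_const hδ0
    have E3 : ∀ᶠ t : ℝ in 𝓝[>] 0, (infDist (yl + t • v) C - infDist yl C)/t < Dv + ε := by
      apply eventually_lt_of_limsup_lt
      · exact (slice_le C yl v).trans_lt (lt_add_of_pos_right _ hε)
      · exact isBoundedUnder_of_eventually_le
          ((eventually_mem_nhdsWithin.mono fun t ht => abs_quot_le C v ht yl).mono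
            fun t ht => (abs_le.1 ht).2)
    obtain ⟨t, ht0, htδ, htD'⟩ := (E1.and (E2.and E3)).exists
    have hεt : 0 < ε * t := mul_pos hε ht0
    have htD : infDist (yl + t • v) C ≤ t * Dv + t * ε := by
      rw [infDist_zero_of_mem hyl, sub_zero, div_lt_iff₀ ht0] at htD'
      nlinarith [htD']
    -- pick a point of C near yl + t v
    obtain ⟨xb, hxbC, hxbd⟩ := (infDist_lt_iff hCne).1
        (lt_add_of_pos_right (infDist (yl + t • v) C) hεt)
    -- eventual facts in n
    have F1 : ∀ᶠ n in atTop, dist (y n) yl < ε * t := by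
      obtain ⟨N, hN⟩ := Metric.tendsto_atTop.1 hyt (ε*t) hεt
      exact eventually_atTop.2 ⟨N, hN⟩
    have F2 : ∀ᶠ n in atTop, infDist xb (Cn n) < ε * t := by
      obtain ⟨N, hN⟩ := Metric.tendsto_atTop.1 (hdist xb hxbC) (ε*t) hεt
      refine eventually_atTop.2 ⟨N, fun n hn => ?_⟩
      have h1 := hN n hn
      rw [Real.dist_eq, sub_zero] at h1
      exact lt_of_abs_lt h1
    have F3 : ∀ᶠ n in atTop, |α n - a| ≤ ε := by
      obtain ⟨N, hN⟩ := Metric.tendsto_atTop.1 hα ε hε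
      refine eventually_atTop.2 ⟨N, fun n hn => ?_⟩
      have h1 := hN n hn
      rw [Real.dist_eq] at h1
      exact h1.le
    filter_upwards [F1, F2, F3] with n hn1 hn2 hn3
    refine csSup_le ⟨⟪ξ, α n • (0:H)⟫_ℝ,
      mem_image_of_mem _ (smul_mem_smul_set (zero_mem_subdiff (Cn n) (hy n)))⟩ ?_
    rintro r ⟨z, hz, rfl⟩
    rw [mem_smul_set] at hz
    rcases hz with ⟨w, hw, rfl⟩
    have hw1 : ‖w‖ ≤ 1 := norm_le_one (Cn n) hw
    -- a point of Cn n near y n + t v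
    obtain ⟨x, hxCn, hxd⟩ := (infDist_lt_iff (hne n)).1
      (lt_add_of_pos_right (infDist (y n + t • v) (Cn n)) hεt)
    have hdun : infDist (y n + t • v) (Cn n) ≤ t * ‖v‖ := by
      calc infDist (y n + t • v) (Cn n) ≤ dist (y n + t • v) (y n) :=
            infDist_le_dist_of_mem (hy n)
        _ = ‖t • v‖ := by rw [dist_eq_norm]; congr 1; abel
        _ = t * ‖v‖ := by rw [norm_smul, Real.norm_eq_abs, abs_of_pos ht0]
    have hxy : ‖x - y n‖ ≤ 2*(t*‖v‖) + ε*t := by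
      have h1 : dist x (y n) ≤ dist x (y n + t • v) + dist (y n + t • v) (y n) :=
        dist_triangle _ _ _
      have h2 : dist x (y n + t • v) = dist (y n + t • v) x := dist_comm _ _
      have h3 : dist (y n + t • v) (y n) = ‖t • v‖ := by rw [dist_eq_norm]; congr 1; abel
      have h4 : ‖t • v‖ = t * ‖v‖ := by rw [norm_smul, Real.norm_eq_abs, abs_of_pos ht0]
      rw [← dist_eq_norm]
      linarith [hxd, hdun]
    have hxyδ : ‖x - y n‖ ≤ δ := by nlinarith [norm_nonneg v]
    -- equi-uniform subsmoothness
    have hwcone : w ∈ clarkeNormalCone (Cn n) (y n) ∩ Metric.closedBall 0 1 :=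
      ⟨subdiff_subset_cone (Cn n) (y n) hw, by simpa [mem_closedBall, dist_zero_right] using hw1⟩
    have h0cone : (0:H) ∈ clarkeNormalCone (Cn n) x ∩ Metric.closedBall 0 1 :=
      ⟨zero_mem_cone (Cn n) hxCn, by simp⟩
    have hkey' := hδ (Cn n) (mem_insert_iff.2 (Or.inr ⟨n, rfl⟩)) (y n) (hy n) x hxCn
        (by rwa [norm_sub_rev]) w hwcone 0 h0cone
    have hkey : ⟪w, x - y n⟫_ℝ ≤ ε * ‖x - y n‖ := by
      rw [zero_sub, inner_neg_left] at hkey'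
      linarith [hkey']
    -- a point of Cn n near xb
    obtain ⟨p, hpCn, hpd⟩ := (infDist_lt_iff (hne n)).1
      (lt_add_of_pos_right (infDist xb (Cn n)) hεt)
    have hdu2 : infDist (y n + t • v) (Cn n) ≤ t * Dv + t * ε + 4*(ε*t) := by
      have h1 : infDist (y n + t • v) (Cn n) ≤ dist (y n + t • v) p :=
        infDist_le_dist_of_mem hpCn
      have h2 : dist (y n + t • v) p ≤
          dist (y n + t • v) (yl + t • v) + dist (yl + t • v) xb + dist xb p :=
        dist_triangle4 _ _ _ _
      have h3 : dist (y n + t • v) (yl + t • v) = dist (y n) yl := dist_add_right _ _ _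
      linarith [htD, hxbd, hpd, hn1, hn2]
    have hinner1 : ⟪w, (y n + t • v) - x⟫_ℝ ≤ dist (y n + t • v) x := by
      have h1 : ⟪w, (y n + t • v) - x⟫_ℝ ≤ ‖w‖ * ‖(y n + t • v) - x‖ :=
        real_inner_le_norm _ _
      have h2 : ‖w‖ * ‖(y n + t • v) - x‖ ≤ 1 * ‖(y n + t • v) - x‖ := by
        gcongr
      rw [dist_eq_norm]
      linarith
    have hsplit : ⟪w, t • v⟫_ℝ = ⟪w, (y n + t • v) - x⟫_ℝ + ⟪w, x - y n⟫_ℝ := by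
      rw [← inner_add_right]
      congr 1
      abel
    have hA3 : ε * ‖x - y n‖ ≤ ε*(2*(t*‖v‖)) + ε*(ε*t) := by nlinarith [hxy, hε.le]
    have hA4 : ε*(ε*t) ≤ ε*t := by nlinarith [hε1, hεt]
    have hfinal : t * ⟪w, v⟫_ℝ ≤ t * (Dv + ε*(7 + 2*‖v‖)) := by
      have e : ⟪w, t • v⟫_ℝ = t * ⟪w, v⟫_ℝ := real_inner_smul_right w v t
      nlinarith [hsplit, hinner1, hkey, hxd, hdu2, hA3, hA4]
    have hwv : ⟪w, v⟫_ℝ ≤ Dv + ε*(7 + 2*‖v‖) := (mul_le_mul_iff_right₀ ht0).1 hfinal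
    -- conclude for this element
    have einner : ⟪ξ, α n • w⟫_ℝ = a * ⟪ξ, w⟫_ℝ + (α n - a) * ⟪ξ, w⟫_ℝ := by
      rw [real_inner_smul_right]; ring
    have e2 : a * ⟪ξ, w⟫_ℝ = ⟪w, v⟫_ℝ := by
      rw [hv, real_inner_smul_right, real_inner_comm]
    have e3 : (α n - a) * ⟪ξ, w⟫_ℝ ≤ ε * ‖ξ‖ := by
      calc (α n - a) * ⟪ξ, w⟫_ℝ ≤ |(α n - a) * ⟪ξ, w⟫_ℝ| := le_abs_self _
        _ = |α n - a| * |⟪ξ, w⟫_ℝ| := abs_mul _ _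
        _ ≤ ε * ‖ξ‖ := by
            have h5 : |⟪ξ, w⟫_ℝ| ≤ ‖ξ‖ * ‖w‖ := abs_real_inner_le_norm ξ w
            have h6 : ‖ξ‖ * ‖w‖ ≤ ‖ξ‖ := by nlinarith [norm_nonneg ξ]
            exact mul_le_mul hn3 (h5.trans h6) (abs_nonneg _) hε.le
    show ⟪ξ, α n • w⟫_ℝ ≤ Dv + ε * (7 + 2*‖v‖ + ‖ξ‖)
    rw [einner, e2]
    nlinarith [hwv, e3]
  -- conclusion
  have hcob : IsCoboundedUnder (· ≤ ·) atTop L :=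
    isCoboundedUnder_le_of_eventually_le _ (Eventually.of_forall hL0)
  have hKpos : (0:ℝ) < 7 + 2*‖v‖ + ‖ξ‖ := by positivity
  apply le_of_forall_sub_le
  intro η hη
  set ε : ℝ := min 1 (η / (7 + 2*‖v‖ + ‖ξ‖)) with hεdef
  have hε : 0 < ε := lt_min one_pos (div_pos hη hKpos)
  have hε1 : ε ≤ 1 := min_le_left _ _
  have h1 : limsup L atTop ≤ Dv + ε * (7 + 2*‖v‖ + ‖ξ‖) :=
    limsup_le_of_le hcob (main ε hε hε1)
  have h2 : ε * (7 + 2*‖v‖ + ‖ξ‖) ≤ η := by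
    have h3 : ε ≤ η / (7 + 2*‖v‖ + ‖ξ‖) := min_le_right _ _
    have h4 : ε * (7 + 2*‖v‖ + ‖ξ‖) ≤ (η / (7 + 2*‖v‖ + ‖ξ‖)) * (7 + 2*‖v‖ + ‖ξ‖) :=
      mul_le_mul_of_nonneg_right h3 hKpos.le
    rwa [div_mul_cancel₀ η hKpos.ne'] at h4
  linarith [hDM, h1, h2]
end

section
/- Let S be a ρ-uniformly prox-regular subset of a Hilbert space, x ∈ H with d_S(x) < ρ, z ∈ proj_S^ε(x) for some ε > 0. Then ‖z - proj_S(x)‖² ≤ (ρ/(ρ - d_S(x))) ε. -/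
open Metric
open scoped InnerProductSpace

theorem stmt17 {H : Type*} [NormedAddCommGroup H] [InnerProductSpace ℝ H] [CompleteSpace H]
    (S : Set H) (hS : S.Nonempty) (hSc : IsClosed S) (ρ : ℝ) (hρ : 0 < ρ)
    (hreg : ∀ x ∈ S, ∀ ζ ∈ proxNormalCone S x, ∀ x' ∈ S,
      ⟪ζ, x' - x⟫_ℝ ≤ ‖ζ‖ / (2 * ρ) * ‖x' - x‖ ^ 2)
    (x : H) (hx : infDist x S < ρ)
    (p : H) (hp : p ∈ S ∧ ‖x - p‖ = infDist x S)
    (ε : ℝ) (hε : 0 < ε)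
    (z : H) (hz : z ∈ S ∧ ‖x - z‖ ^ 2 < (infDist x S) ^ 2 + ε) :
    ‖z - p‖ ^ 2 ≤ ρ / (ρ - infDist x S) * ε := by
  obtain ⟨hpS, hpd⟩ := hp
  obtain ⟨hzS, hzd⟩ := hz
  set d := infDist x S with hd
  have hd0 : 0 ≤ d := infDist_nonneg
  -- x - p is a proximal normal at p
  have hmem : (x - p) ∈ proxNormalCone S p := by
    refine ⟨1/2, by norm_num, 1, one_pos, fun y hy _ => ?_⟩
    have h1 : d ≤ ‖x - y‖ := by
      rw [hd, ← dist_eq_norm]; exact infDist_le_dist_of_mem hy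
    have h2 : ‖x - p‖ ^ 2 ≤ ‖x - y‖ ^ 2 := by
      rw [hpd]; exact pow_le_pow_left₀ hd0 h1 2
    have h3 : x - p - (y - p) = x - y := by abel
    have h4 : ‖x - y‖ ^ 2
        = ‖x - p‖ ^ 2 - 2 * ⟪x - p, y - p⟫_ℝ + ‖y - p‖ ^ 2 := by
      rw [← h3, norm_sub_sq_real]
    nlinarith [h2, h4]
  have hkey := hreg p hpS (x - p) hmem z hzS
  rw [hpd] at hkey
  -- expand ‖z - p‖²
  have hid : ‖z - p‖ ^ 2 = ‖z - x‖ ^ 2 + 2 * ⟪z - x, x - p⟫_ℝ + ‖x - p‖ ^ 2 := by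
    have h := norm_add_sq_real (z - x) (x - p)
    rw [sub_add_sub_cancel] at h
    linarith [h]
  have hinner : ⟪x - p, z - p⟫_ℝ = ⟪z - x, x - p⟫_ℝ + ‖x - p‖ ^ 2 := by
    have : z - p = (z - x) + (x - p) := by abel
    rw [real_inner_comm, this, inner_add_left, real_inner_self_eq_norm_sq]
  have hnz : ‖x - z‖ = ‖z - x‖ := norm_sub_rev x z
  rw [hnz] at hzd
  rw [hpd] at hid
  have hρd : 0 < ρ - d := by linarith
  -- combine: (ρ - d) * ‖z-p‖² ≤ ρ * ε
  have hcomb : (ρ - d) * ‖z - p‖ ^ 2 ≤ ρ * ε := by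
    have h2k : 2 * ⟪x - p, z - p⟫_ℝ ≤ (d / ρ) * ‖z - p‖ ^ 2 := by
      have heq : (d / ρ) * ‖z - p‖ ^ 2 = 2 * (d / (2 * ρ) * ‖z - p‖ ^ 2) := by
        field_simp
      rw [heq]; linarith [hkey]
    have hzp : ‖z - p‖ ^ 2 ≤ ε + (d / ρ) * ‖z - p‖ ^ 2 := by
      nlinarith [hid, hinner, hzd, h2k]
    have : (d / ρ) * ρ = d := div_mul_cancel₀ d (ne_of_gt hρ)
    nlinarith [hzp, sq_nonneg ‖z - p‖]
  rw [div_mul_eq_mul_div, le_div_iff₀ hρd]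
  linarith [hcomb]
end
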